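/- arXiv:1101.3857 — 7 statements merged into one kernel-verified Lean document; each statement's English description precedes it below -/
import Mathlib

section
/- For every x ∈ 𝕋, the upper local return rate satisfies R_up(x) = limsup_{k→∞} q_{k+1} / r_k(x) (equivalently, R_up(x) = 1 / liminf_{k→∞} r_k(x)/q_{k+1}, as extended reals). -/
/-!
The cylinder `I_{x,n}` is an arc whose interior avoids the points `-kα`, `k ≤ n`, and the return
time of an arc of length `L` is the least `k ≥ 1` with `‖kα‖ < L`. By the best approximation
property of the convergents this is `q_j` for the `j` with `η_j < L ≤ η_{j-1}`; so `τ(I_{x,n})`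
only takes the values `q_j`, and it tends to infinity because the cylinders shrink.
For such a sequence `T_n`, `T_n = q_{k+1}` forces `n ≥ r_k(x)`, hence `T_n / n ≤ q_{k+1} / r_k(x)`;
conversely `q_{k+1} / r_k(x) ≤ T_{r_k} / r_k(x)`, and both `k` and `r_k(x)` tend to infinity.
-/

open Filter MeasureTheory Set
open scoped ENNReal

noncomputable section

/-- The rotation of the circle `𝕋 = ℝ/ℤ` by the angle `α`. -/
def rotF (α : ℝ) (y : UnitAddCircle) : UnitAddCircle := y + (α : UnitAddCircle)

/-- The Poincaré return time `τ(M)` of a set `M ⊆ 𝕋` under the rotation by `α`. -/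
def retTime (α : ℝ) (M : Set UnitAddCircle) : ℕ :=
  sInf {k : ℕ | 1 ≤ k ∧ ((rotF α)^[k] '' M ∩ M).Nonempty}

/-- The arc `I₁ = [1-α, 1)` of the circle. -/
def I1 (α : ℝ) : Set UnitAddCircle := (fun t : ℝ => (t : UnitAddCircle)) '' Ico (1 - α) 1

/-- The `n`-th cylinder interval `I_{x,n}` of `x` for the Sturmian coding
(`I_{x,0} = 𝕋` by convention). -/
def cyl (α : ℝ) (x : UnitAddCircle) (n : ℕ) : Set UnitAddCircle :=
  {y | ∀ k < n, ((rotF α)^[k] y ∈ I1 α ↔ (rotF α)^[k] x ∈ I1 α)}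

/-- The lower local return rate `R_low(x) = liminf_n τ(I_{x,n})/n`, valued in `[0,∞]`. -/
def Rlow (α : ℝ) (x : UnitAddCircle) : ℝ≥0∞ :=
  liminf (fun n : ℕ => (retTime α (cyl α x n) : ℝ≥0∞) / (n : ℝ≥0∞)) atTop

/-- The upper local return rate `R_up(x) = limsup_n τ(I_{x,n})/n`, valued in `[0,∞]`. -/
def Rup (α : ℝ) (x : UnitAddCircle) : ℝ≥0∞ :=
  limsup (fun n : ℕ => (retTime α (cyl α x n) : ℝ≥0∞) / (n : ℝ≥0∞)) atTop

/-- `rjump α q x k` is the paper's `r_{k-1}(x) = min {n | τ(I_{x,n}) ≥ q_{k-1+1}}`: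
with our indexing, `q (k+1)` is the paper's `q_k`.  In particular `rjump α q x (k+1)`
is the paper's `r_k(x)` for `k ≥ 0`, and `rjump α q x 0` is the paper's `r_{-1}(x) = 0`. -/
def rjump (α : ℝ) (q : ℕ → ℕ) (x : UnitAddCircle) (k : ℕ) : ℕ :=
  sInf {n : ℕ | q (k + 1) ≤ retTime α (cyl α x n)}

theorem le_abs_mul_sub_mul_of_add_mul_eq {s t k Q₁ Q₂ : ℤ} {e₁ e₂ : ℝ} (hk : 0 < k)
    (hkQ : k < Q₂) (hQ₁ : 0 ≤ Q₁) (hdecomp : s * Q₂ + t * Q₁ = k) (he₁ : 0 ≤ e₁) (he₂ : 0 ≤ e₂) :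
    e₁ ≤ |s * e₂ - t * e₁| := by
  rcases lt_trichotomy t 0 with ht | rfl | ht
  · have hs : (1 : ℝ) ≤ s := by exact_mod_cast (by nlinarith : 1 ≤ s)
    have ht' : (t : ℝ) ≤ -1 := by exact_mod_cast (by omega : t ≤ -1)
    rw [le_abs]; left; nlinarith
  · rcases le_or_gt s 0 with hs | hs <;> nlinarith
  · have hs : (s : ℝ) ≤ 0 := by exact_mod_cast (by nlinarith : s ≤ 0)
    have ht' : (1 : ℝ) ≤ t := by exact_mod_cast ht
    rw [le_abs]; right; nlinarith

structure IsCFConvergents (α : ℝ) (a p q : ℕ → ℕ) : Prop where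
  mem_Ioo : α ∈ Ioo (0 : ℝ) 1
  one_le_a : ∀ k, 1 ≤ a k
  q_zero : q 0 = 0
  q_one : q 1 = 1
  q_add_two : ∀ k, q (k + 2) = a k * q (k + 1) + q k
  p_zero : p 0 = 1
  p_one : p 1 = 0
  p_add_two : ∀ k, p (k + 2) = a k * p (k + 1) + p k
  neg_one_pow_mul_sub_pos : ∀ k, 0 < (-1 : ℝ) ^ (k + 1) * ((q k : ℝ) * α - (p k : ℝ))

/-- `eta α p q k` is the paper's `η_{k-1}`. -/
def eta (α : ℝ) (p q : ℕ → ℕ) (k : ℕ) : ℝ := (-1 : ℝ) ^ (k + 1) * ((q k : ℝ) * α - (p k : ℝ))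

namespace IsCFConvergents

variable {α : ℝ} {a p q : ℕ → ℕ}

theorem eta_pos (h : IsCFConvergents α a p q) (k : ℕ) : 0 < eta α p q k :=
  h.neg_one_pow_mul_sub_pos k

theorem eta_zero (h : IsCFConvergents α a p q) : eta α p q 0 = 1 := by
  simp [eta, h.q_zero, h.p_zero]

theorem eta_add_two (h : IsCFConvergents α a p q) (k : ℕ) :
    eta α p q (k + 2) = eta α p q k - a k * eta α p q (k + 1) := by
  simp only [eta, h.q_add_two, h.p_add_two, pow_succ]
  push_cast
  ring

theorem sub_eq_neg_one_pow_mul_eta (k : ℕ) :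
    (q k : ℝ) * α - p k = (-1) ^ (k + 1) * eta α p q k := by
  rw [eta, ← mul_assoc, ← pow_add, Even.neg_one_pow ⟨k + 1, rfl⟩, one_mul]

theorem abs_sub_eq_eta (h : IsCFConvergents α a p q) (k : ℕ) :
    |(q k : ℝ) * α - p k| = eta α p q k := by
  rw [sub_eq_neg_one_pow_mul_eta, abs_mul, abs_pow, abs_neg, abs_one, one_pow, one_mul,
    abs_of_pos (h.eta_pos k)]

theorem eta_succ_lt (h : IsCFConvergents α a p q) (k : ℕ) : eta α p q (k + 1) < eta α p q k := by
  have ha : (1 : ℝ) ≤ a k := by exact_mod_cast h.one_le_a k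
  nlinarith [h.eta_add_two k, h.eta_pos (k + 1), h.eta_pos (k + 2)]

theorem eta_strictAnti (h : IsCFConvergents α a p q) : StrictAnti (eta α p q) :=
  strictAnti_nat_of_succ_lt h.eta_succ_lt

theorem eta_add_two_lt_half (h : IsCFConvergents α a p q) (k : ℕ) :
    eta α p q (k + 2) < eta α p q k / 2 := by
  have ha : (1 : ℝ) ≤ a k := by exact_mod_cast h.one_le_a k
  nlinarith [h.eta_add_two k, h.eta_pos (k + 1), h.eta_succ_lt (k + 1)]

theorem exists_eta_lt (h : IsCFConvergents α a p q) {δ : ℝ} (hδ : 0 < δ) :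
    ∃ k, eta α p q k < δ := by
  have hpow : ∀ m, eta α p q (2 * m) ≤ (1 / 2) ^ m := by
    intro m
    induction m with
    | zero => simp [h.eta_zero]
    | succ m ih =>
      rw [show 2 * (m + 1) = 2 * m + 2 by ring, pow_succ]
      linarith [h.eta_add_two_lt_half (2 * m)]
  obtain ⟨m, hm⟩ := exists_pow_lt_of_lt_one hδ (by norm_num : (1 : ℝ) / 2 < 1)
  exact ⟨2 * m, (hpow m).trans_lt hm⟩

theorem exists_eta_lt_le (h : IsCFConvergents α a p q) {L : ℝ} (hL0 : 0 < L) (hL1 : L ≤ 1) :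
    ∃ j, eta α p q (j + 1) < L ∧ L ≤ eta α p q j := by
  classical
  have hex : ∃ j, eta α p q (j + 1) < L := by
    obtain ⟨k, hk⟩ := h.exists_eta_lt hL0
    exact ⟨k, (h.eta_succ_lt k).trans hk⟩
  refine ⟨Nat.find hex, Nat.find_spec hex, ?_⟩
  cases hj : Nat.find hex with
  | zero => simpa [h.eta_zero] using hL1
  | succ i => exact not_lt.1 (Nat.find_min hex (by omega : i < Nat.find hex))

theorem one_le_q_succ (h : IsCFConvergents α a p q) (k : ℕ) : 1 ≤ q (k + 1) := by
  induction k with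
  | zero => simp [h.q_one]
  | succ k ih => rw [h.q_add_two]; nlinarith [h.one_le_a k]

theorem q_monotone (h : IsCFConvergents α a p q) : Monotone q := by
  refine monotone_nat_of_le_succ fun k => ?_
  cases k with
  | zero => simp [h.q_zero]
  | succ k => rw [h.q_add_two]; nlinarith [h.one_le_a k]

theorem le_q_add_two (h : IsCFConvergents α a p q) (k : ℕ) : k + 1 ≤ q (k + 2) := by
  induction k with
  | zero => rw [h.q_add_two, h.q_one]; nlinarith [h.one_le_a 0]
  | succ k ih =>
    rw [h.q_add_two (k + 1)]
    nlinarith [h.one_le_a (k + 1), h.one_le_a k, h.one_le_q_succ k]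

theorem q_mul_p_sub (h : IsCFConvergents α a p q) (k : ℕ) :
    (q (k + 1) : ℤ) * p k - q k * p (k + 1) = (-1) ^ k := by
  induction k with
  | zero => simp [h.q_zero, h.q_one, h.p_zero]
  | succ k ih =>
    rw [h.q_add_two, h.p_add_two, pow_succ]
    push_cast
    linear_combination (-1 : ℤ) * ih

/-- Best approximation by convergents: `‖kα‖ ≥ η_j` for `0 < k < q_{j+1}` (paper indexing). -/
theorem eta_le_abs_mul_sub (h : IsCFConvergents α a p q) {j k : ℕ} (hk : 1 ≤ k)
    (hkq : k < q (j + 2)) (m : ℤ) : eta α p q (j + 1) ≤ |(k : ℝ) * α - m| := by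
  set ε : ℤ := (-1) ^ (j + 1)
  have hdet : (q (j + 2) : ℤ) * p (j + 1) - q (j + 1) * p (j + 2) = ε := h.q_mul_p_sub (j + 1)
  have hε : ε * ε = 1 := by rw [← pow_add, Even.neg_one_pow ⟨j + 1, rfl⟩]
  -- `(k, m)` in the basis `(q (j+2), p (j+2)), (q (j+1), p (j+1))`, unimodular by `hdet`
  set s : ℤ := ε * (k * p (j + 1) - m * q (j + 1))
  set t : ℤ := ε * (m * q (j + 2) - k * p (j + 2))
  have hk' : s * q (j + 2) + t * q (j + 1) = k := by linear_combination (ε * k) * hdet + k * hε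
  have hm : s * p (j + 2) + t * p (j + 1) = m := by linear_combination (ε * m) * hdet + m * hε
  have hkR : (s : ℝ) * q (j + 2) + t * q (j + 1) = k := by exact_mod_cast hk'
  have hmR : (s : ℝ) * p (j + 2) + t * p (j + 1) = m := by exact_mod_cast hm
  have hsplit :
      (k : ℝ) * α - m = (-1) ^ (j + 1) * (s * eta α p q (j + 2) - t * eta α p q (j + 1)) := by
    have h2 := sub_eq_neg_one_pow_mul_eta (α := α) (p := p) (q := q) (j + 2)
    have h1 := sub_eq_neg_one_pow_mul_eta (α := α) (p := p) (q := q) (j + 1)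
    rw [pow_succ, pow_succ] at h2
    rw [pow_succ] at h1
    linear_combination (-α) * hkR + hmR + s * h2 + t * h1
  rw [hsplit, abs_mul, abs_pow, abs_neg, abs_one, one_pow, one_mul]
  exact le_abs_mul_sub_mul_of_add_mul_eq (by omega) (by exact_mod_cast hkq) (by positivity) hk'
    (h.eta_pos _).le (h.eta_pos _).le

end IsCFConvergents

def arc (A B : ℝ) : Set UnitAddCircle := (fun t : ℝ => (t : UnitAddCircle)) '' Ico A B

theorem coe_eq_coe_iff_exists_int {s t : ℝ} :
    (s : UnitAddCircle) = t ↔ ∃ m : ℤ, s - t = m := by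
  rw [← sub_eq_zero, ← AddCircle.coe_sub, AddCircle.coe_eq_zero_iff]
  simp [eq_comm]

theorem exists_mem_Ico_coe_eq (x : UnitAddCircle) :
    ∃ t ∈ Ico (0 : ℝ) 1, (t : UnitAddCircle) = x :=
  ⟨AddCircle.equivIco 1 0 x, by simpa using (AddCircle.equivIco 1 0 x).2, AddCircle.coe_equivIco⟩

theorem rotF_iterate_coe (α t : ℝ) (k : ℕ) :
    (rotF α)^[k] (t : UnitAddCircle) = ((t + k * α : ℝ) : UnitAddCircle) := by
  induction k with
  | zero => simp
  | succ k ih =>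
    rw [Function.iterate_succ_apply', ih, rotF, ← AddCircle.coe_add]
    push_cast
    ring_nf

theorem iterate_image_arc_inter_nonempty_iff (α A B : ℝ) (k : ℕ) :
    ((rotF α)^[k] '' arc A B ∩ arc A B).Nonempty ↔ ∃ m : ℤ, |(k : ℝ) * α - m| < B - A := by
  constructor
  · rintro ⟨-, ⟨-, ⟨s, hs, rfl⟩, rfl⟩, ⟨u, hu, hus⟩⟩
    rw [rotF_iterate_coe, coe_eq_coe_iff_exists_int] at hus
    obtain ⟨m, hm⟩ := hus
    refine ⟨-m, abs_sub_lt_iff.2 ⟨?_, ?_⟩⟩ <;> push_cast <;> linarith [hs.1, hs.2, hu.1, hu.2]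
  · rintro ⟨m, hm⟩
    set d := (k : ℝ) * α - m with hd_def
    have hmeet : ∀ s ∈ Ico A B, s + d ∈ Ico A B →
        ((rotF α)^[k] '' arc A B ∩ arc A B).Nonempty := by
      intro s hs hsd
      refine ⟨_, ⟨_, ⟨s, hs, rfl⟩, rfl⟩, s + d, hsd, ?_⟩
      rw [rotF_iterate_coe, coe_eq_coe_iff_exists_int]
      exact ⟨-m, by rw [hd_def]; push_cast; ring⟩
    rcases abs_sub_lt_iff.1 hm with ⟨h₁, h₂⟩
    rcases le_total 0 d with hd | hd
    · exact hmeet A ⟨le_rfl, by linarith⟩ ⟨by linarith, by linarith⟩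
    · exact hmeet (A - d) ⟨by linarith, by linarith⟩ ⟨by linarith, by linarith⟩

theorem retTime_arc (α A B : ℝ) :
    retTime α (arc A B) = sInf {k : ℕ | 1 ≤ k ∧ ∃ m : ℤ, |(k : ℝ) * α - m| < B - A} := by
  simp only [retTime, iterate_image_arc_inter_nonempty_iff]

theorem coe_mem_arc_iff {A B t : ℝ} (hA : 0 ≤ A) (hB : B ≤ 1) (ht : t ∈ Ico (0 : ℝ) 1) :
    (t : UnitAddCircle) ∈ arc A B ↔ t ∈ Ico A B := by
  refine ⟨?_, fun h => ⟨t, h, rfl⟩⟩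
  rintro ⟨s, hs, hst⟩
  have hs' : s ∈ Ico (0 : ℝ) (0 + 1) := ⟨hA.trans hs.1, by linarith [hs.2]⟩
  rwa [← (AddCircle.coe_eq_coe_iff_of_mem_Ico hs' (by simpa using ht)).1 hst]

theorem floor_le_floor_add_and_le (s : ℝ) {α : ℝ} (h0 : 0 ≤ α) (h1 : α ≤ 1) :
    ⌊s⌋ ≤ ⌊s + α⌋ ∧ ⌊s + α⌋ ≤ ⌊s⌋ + 1 :=
  ⟨Int.floor_mono (by linarith), (Int.floor_mono (by linarith)).trans_eq (Int.floor_add_one s)⟩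

theorem coe_mem_I1_iff {α : ℝ} (hα : α ∈ Ioo (0 : ℝ) 1) (t : ℝ) :
    (t : UnitAddCircle) ∈ I1 α ↔ ⌊t + α⌋ = ⌊t⌋ + 1 := by
  constructor
  · rintro ⟨u, hu, hut⟩
    obtain ⟨m, hm⟩ := coe_eq_coe_iff_exists_int.1 hut
    have h₁ : ⌊t⌋ = -m := by
      rw [Int.floor_eq_iff]; push_cast; constructor <;> linarith [hu.1, hu.2, hα.2]
    have h₂ : ⌊t + α⌋ = 1 - m := by
      rw [Int.floor_eq_iff]; push_cast; constructor <;> linarith [hu.1, hu.2, hα.2]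
    omega
  · intro hfl
    have hle : ((⌊t⌋ + 1 : ℤ) : ℝ) ≤ t + α := hfl ▸ Int.floor_le (t + α)
    push_cast at hle
    refine ⟨t - ⌊t⌋, ⟨by linarith, by linarith [Int.lt_floor_add_one t]⟩, ?_⟩
    exact coe_eq_coe_iff_exists_int.2 ⟨-⌊t⌋, by push_cast; ring⟩

theorem forall_le_eq_iff_forall_lt_step_iff {g g' : ℕ → ℤ}
    (hg : ∀ k, g k ≤ g (k + 1) ∧ g (k + 1) ≤ g k + 1)
    (hg' : ∀ k, g' k ≤ g' (k + 1) ∧ g' (k + 1) ≤ g' k + 1) (h0 : g 0 = g' 0) (n : ℕ) :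
    (∀ k ≤ n, g k = g' k) ↔ ∀ k < n, (g (k + 1) = g k + 1 ↔ g' (k + 1) = g' k + 1) := by
  refine ⟨fun H k hk => by rw [H k hk.le, H (k + 1) hk], fun H k hk => ?_⟩
  induction k with
  | zero => exact h0
  | succ k ih =>
    have := ih (by omega); have := H k (by omega); have := hg k; have := hg' k
    omega

theorem coe_mem_cyl_iff {α : ℝ} (hα : α ∈ Ioo (0 : ℝ) 1) {t t₀ : ℝ} (h0 : ⌊t⌋ = ⌊t₀⌋) (n : ℕ) :
    (t : UnitAddCircle) ∈ cyl α t₀ n ↔ ∀ k ≤ n, ⌊t + k * α⌋ = ⌊t₀ + k * α⌋ := by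
  have hsucc : ∀ (u : ℝ) (k : ℕ), u + ((k + 1 : ℕ) : ℝ) * α = u + k * α + α := by
    intro u k; push_cast; ring
  have hstep : ∀ (u : ℝ) (k : ℕ), (rotF α)^[k] (u : UnitAddCircle) ∈ I1 α ↔
      ⌊u + ((k + 1 : ℕ) : ℝ) * α⌋ = ⌊u + k * α⌋ + 1 := by
    intro u k
    rw [rotF_iterate_coe, coe_mem_I1_iff hα, hsucc]
  have hmono : ∀ (u : ℝ) (k : ℕ), ⌊u + k * α⌋ ≤ ⌊u + ((k + 1 : ℕ) : ℝ) * α⌋ ∧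
      ⌊u + ((k + 1 : ℕ) : ℝ) * α⌋ ≤ ⌊u + k * α⌋ + 1 := by
    intro u k
    rw [hsucc]
    exact floor_le_floor_add_and_le _ hα.1.le hα.2.le
  simp only [cyl, mem_ofPred_eq, hstep]
  exact forall_le_eq_iff_forall_lt_step_iff (g := fun k => ⌊t + k * α⌋)
    (g' := fun k => ⌊t₀ + k * α⌋) (hmono t) (hmono t₀) (by simpa using h0) n |>.symm

theorem exists_cyl_eq_arc {α : ℝ} (hα : α ∈ Ioo (0 : ℝ) 1) (x : UnitAddCircle) (n : ℕ) :
    ∃ A B : ℝ, 0 < B - A ∧ B - A ≤ 1 ∧ cyl α x n = arc A B ∧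
      ∀ k ≤ n, ∀ m : ℤ, (m : ℝ) - k * α ∉ Ioo A B := by
  obtain ⟨t₀, ht₀, rfl⟩ := exists_mem_Ico_coe_eq x
  have hne : (Finset.range (n + 1)).Nonempty := Finset.nonempty_range_add_one
  set lo : ℕ → ℝ := fun k => ⌊t₀ + k * α⌋ - k * α
  set A := (Finset.range (n + 1)).sup' hne lo
  set B := (Finset.range (n + 1)).inf' hne (fun k => lo k + 1)
  have hA : ∀ k ≤ n, lo k ≤ A := fun k hk => Finset.le_sup' lo (by simpa [Nat.lt_succ_iff])
  have hB : ∀ k ≤ n, B ≤ lo k + 1 := fun k hk => Finset.inf'_le _ (by simpa [Nat.lt_succ_iff])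
  have hfloor₀ : ⌊t₀⌋ = 0 := Int.floor_eq_zero_iff.2 ht₀
  have hA0 : 0 ≤ A := by simpa [lo, hfloor₀] using hA 0 (Nat.zero_le n)
  have hB1 : B ≤ 1 := by simpa [lo, hfloor₀] using hB 0 (Nat.zero_le n)
  have hmem : ∀ t, t ∈ Ico A B ↔ ∀ k ≤ n, ⌊t + k * α⌋ = ⌊t₀ + k * α⌋ := by
    intro t
    simp only [mem_Ico, A, B, Finset.sup'_le_iff, Finset.lt_inf'_iff, Finset.mem_range,
      Nat.lt_succ_iff, Int.floor_eq_iff, lo, ← forall_and]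
    refine forall₂_congr fun k _ => ?_
    constructor <;> rintro ⟨h₁, h₂⟩ <;> constructor <;> linarith
  have ht₀AB : t₀ ∈ Ico A B := (hmem t₀).2 fun _ _ => rfl
  refine ⟨A, B, by linarith [ht₀AB.1, ht₀AB.2], by linarith, ?_, ?_⟩
  · ext y
    obtain ⟨t, ht, rfl⟩ := exists_mem_Ico_coe_eq y
    rw [coe_mem_arc_iff hA0 hB1 ht, hmem,
      coe_mem_cyl_iff hα (by rw [hfloor₀, Int.floor_eq_zero_iff.2 ht])]
  · rintro k hk m ⟨h₁, h₂⟩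
    have hlo : (⌊t₀ + k * α⌋ : ℝ) < m := by linarith [hA k hk]
    have hhi : (m : ℝ) < ⌊t₀ + k * α⌋ + 1 := by linarith [hB k hk]
    have hlo' : ⌊t₀ + k * α⌋ < m := by exact_mod_cast hlo
    have hhi' : m < ⌊t₀ + k * α⌋ + 1 := by exact_mod_cast hhi
    omega

theorem exists_le_int_add_mul_mem_Ioo_of_pos {e A B : ℝ} (he : 0 < e) (heAB : e < B - A) :
    ∃ c ≤ ⌊1 / e⌋₊ + 1, ∃ m : ℤ, (m : ℝ) + c * e ∈ Ioo A B := by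
  -- the first multiple of `e` beyond `fract A` overshoots it by at most `e`
  have hy : 0 ≤ Int.fract A / e := div_nonneg (Int.fract_nonneg A) he.le
  have hover : Int.fract A < (⌊Int.fract A / e⌋₊ + 1 : ℕ) * e := by
    push_cast; rw [← div_lt_iff₀ he]; exact Nat.lt_floor_add_one _
  have hunder : (⌊Int.fract A / e⌋₊ : ℝ) * e ≤ Int.fract A := by
    rw [← le_div_iff₀ he]; exact Nat.floor_le hy
  refine ⟨⌊Int.fract A / e⌋₊ + 1, ?_, ⌊A⌋, ?_, ?_⟩
  · exact Nat.add_le_add_right (Nat.floor_mono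
      (div_le_div_of_nonneg_right (Int.fract_lt_one A).le he.le)) 1
  · linarith [Int.floor_add_fract A]
  · push_cast at hover ⊢; linarith [Int.floor_add_fract A]

theorem exists_le_int_add_mul_mem_Ioo {d A B : ℝ} (hd : d ≠ 0) (hdAB : |d| < B - A) :
    ∃ c ≤ ⌊1 / |d|⌋₊ + 1, ∃ m : ℤ, (m : ℝ) + c * d ∈ Ioo A B := by
  rcases hd.lt_or_gt with hneg | hpos
  · rw [abs_of_neg hneg] at hdAB ⊢
    obtain ⟨c, hc, m, h₁, h₂⟩ :=
      exists_le_int_add_mul_mem_Ioo_of_pos (A := -B) (B := -A) (neg_pos.2 hneg) (by linarith)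
    exact ⟨c, hc, -m, by push_cast; linarith, by push_cast; linarith⟩
  · rw [abs_of_pos hpos] at hdAB ⊢
    exact exists_le_int_add_mul_mem_Ioo_of_pos hpos hdAB

namespace IsCFConvergents

variable {α : ℝ} {a p q : ℕ → ℕ}

theorem retTime_arc_eq (h : IsCFConvergents α a p q) {A B : ℝ} {j : ℕ}
    (hj : eta α p q (j + 1) < B - A) (hj' : B - A ≤ eta α p q j) :
    retTime α (arc A B) = q (j + 1) := by
  rw [retTime_arc]
  refine IsLeast.csInf_eq ⟨⟨h.one_le_q_succ j, p (j + 1), ?_⟩, ?_⟩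
  · rwa [Int.cast_natCast, h.abs_sub_eq_eta]
  · rintro k ⟨hk, m, hm⟩
    by_contra! hlt
    cases j with
    | zero => rw [h.q_one] at hlt; omega
    | succ i => linarith [h.eta_le_abs_mul_sub hk hlt m]

theorem exists_retTime_cyl_eq (h : IsCFConvergents α a p q) (x : UnitAddCircle) (n : ℕ) :
    ∃ j, ∃ A B : ℝ, retTime α (cyl α x n) = q (j + 1) ∧ eta α p q (j + 1) < B - A ∧
      ∀ k ≤ n, ∀ m : ℤ, (m : ℝ) - k * α ∉ Ioo A B := by
  obtain ⟨A, B, hpos, hle, hcyl, havoid⟩ := exists_cyl_eq_arc h.mem_Ioo x n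
  obtain ⟨j, hj, hj'⟩ := h.exists_eta_lt_le hpos hle
  exact ⟨j, A, B, by rw [hcyl, h.retTime_arc_eq hj hj'], hj, havoid⟩

theorem exists_sub_le_eta_of_forall_notMem (h : IsCFConvergents α a p q) (j : ℕ) :
    ∃ N : ℕ, ∀ A B : ℝ, (∀ k ≤ N, ∀ m : ℤ, (m : ℝ) - k * α ∉ Ioo A B) → B - A ≤ eta α p q j := by
  refine ⟨(⌊1 / eta α p q j⌋₊ + 1) * q j, fun A B havoid => ?_⟩
  by_contra! hlt
  have habs : |(p j : ℝ) - q j * α| = eta α p q j := by rw [abs_sub_comm, h.abs_sub_eq_eta]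
  obtain ⟨c, hc, m, hmem⟩ := exists_le_int_add_mul_mem_Ioo (d := p j - q j * α)
    (by rw [← abs_pos, habs]; exact h.eta_pos j) (by rwa [habs])
  rw [habs] at hc
  refine havoid (c * q j) (Nat.mul_le_mul_right _ hc) (m + c * p j) ?_
  convert hmem using 1
  push_cast
  ring

theorem tendsto_retTime_cyl (h : IsCFConvergents α a p q) (x : UnitAddCircle) :
    Tendsto (fun n => retTime α (cyl α x n)) atTop atTop := by
  refine tendsto_atTop_atTop.2 fun b => ?_
  obtain ⟨N, hN⟩ := h.exists_sub_le_eta_of_forall_notMem (b + 1)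
  refine ⟨N, fun n hn => ?_⟩
  obtain ⟨j, A, B, hret, hj, havoid⟩ := h.exists_retTime_cyl_eq x n
  have hbj : b + 1 < j + 1 := h.eta_strictAnti.lt_iff_gt.1
    (hj.trans_le (hN A B fun k hk => havoid k (hk.trans hn)))
  calc b ≤ q (b + 2) := (h.le_q_add_two b).trans' (Nat.le_succ b)
    _ ≤ q (j + 1) := h.q_monotone (by omega)
    _ = _ := hret.symm

theorem eventually_retTime_cyl_mem_range (h : IsCFConvergents α a p q) (x : UnitAddCircle) :
    ∀ᶠ n in atTop, retTime α (cyl α x n) ∈ range fun k => q (k + 2) := by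
  filter_upwards [(h.tendsto_retTime_cyl x).eventually_gt_atTop 1] with n hn
  obtain ⟨j, -, -, hret, -⟩ := h.exists_retTime_cyl_eq x n
  cases j with
  | zero => rw [hret, h.q_one] at hn; omega
  | succ i => exact ⟨i, hret.symm⟩

end IsCFConvergents

theorem limsup_le_limsup_of_forall_eventually_exists_le {β : Type*} [CompleteLattice β]
    {u v : ℕ → β} (h : ∀ N, ∀ᶠ k in atTop, ∃ n ≥ N, u k ≤ v n) :
    limsup u atTop ≤ limsup v atTop := by
  rw [limsup_eq_iInf_iSup_of_nat (u := v)]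
  exact le_iInf fun N => limsup_le_of_le (h := (h N).mono fun k ⟨n, hn, hle⟩ =>
    hle.trans (le_iSup₂ (f := fun i (_ : i ≥ N) => v i) n hn))

theorem limsup_div_eq_limsup_div_sInf {T Q : ℕ → ℕ} (hT : Tendsto T atTop atTop)
    (hQ : Tendsto Q atTop atTop) (hrange : ∀ᶠ n in atTop, T n ∈ range Q) :
    limsup (fun n => (T n : ℝ≥0∞) / n) atTop =
      limsup (fun k => (Q k : ℝ≥0∞) / (sInf {n | Q k ≤ T n} : ℕ)) atTop := by
  have hmem : ∀ k, Q k ≤ T (sInf {n | Q k ≤ T n}) :=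
    fun k => Nat.sInf_mem (hT.eventually_ge_atTop (Q k)).exists
  apply le_antisymm
  · refine limsup_le_limsup_of_forall_eventually_exists_le fun K => ?_
    filter_upwards [hrange, hT.eventually_gt_atTop ((Finset.range K).sup Q)] with n ⟨k, hk⟩ hn
    refine ⟨k, ?_, ?_⟩
    · by_contra! hkK
      exact hn.not_ge (hk ▸ Finset.le_sup (Finset.mem_range.2 hkK))
    · rw [← hk]
      exact ENNReal.div_le_div_left
        (Nat.cast_le.2 (Nat.sInf_le (show n ∈ {n | Q k ≤ T n} from hk.le))) _
  · refine limsup_le_limsup_of_forall_eventually_exists_le fun N => ?_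
    filter_upwards [hQ.eventually_gt_atTop ((Finset.range N).sup T)] with k hk
    refine ⟨_, ?_, ENNReal.div_le_div_right (by exact_mod_cast hmem k) _⟩
    by_contra! hlt
    exact hk.not_ge ((hmem k).trans (Finset.le_sup (Finset.mem_range.2 hlt)))

theorem statement1_general
    (α : ℝ) (hα : α ∈ Set.Ioo (0 : ℝ) 1)
    (a p q : ℕ → ℕ) (ha : ∀ k, 1 ≤ a k)
    -- `a k`, `p (k+1)`, `q (k+1)` are the paper's `a_{k+1}`, `p_k`, `q_k`;
    -- `p 0`, `q 0` are the paper's `p_{-1} = 1`, `q_{-1} = 0`.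
    (hq0 : q 0 = 0) (hq1 : q 1 = 1) (hq : ∀ k, q (k + 2) = a k * q (k + 1) + q k)
    (hp0 : p 0 = 1) (hp1 : p 1 = 0) (hp : ∀ k, p (k + 2) = a k * p (k + 1) + p k)
    -- `a` is the continued fraction expansion of `α`:
    -- the paper's `η_k = (-1)^k (q_k α - p_k)` is positive for all `k ≥ -1`.
    (hcf : ∀ k, 0 < (-1 : ℝ) ^ (k + 1) * ((q k : ℝ) * α - (p k : ℝ)))
    (x : UnitAddCircle) :
    Rup α x =
      limsup (fun k : ℕ => (q (k + 2) : ℝ≥0∞) / (rjump α q x (k + 1) : ℝ≥0∞)) atTop ∧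
    Rup α x =
      (liminf (fun k : ℕ => (rjump α q x (k + 1) : ℝ≥0∞) / (q (k + 2) : ℝ≥0∞)) atTop)⁻¹ := by
  have h : IsCFConvergents α a p q := ⟨hα, ha, hq0, hq1, hq, hp0, hp1, hp, hcf⟩
  have hup : Rup α x =
      limsup (fun k : ℕ => (q (k + 2) : ℝ≥0∞) / (rjump α q x (k + 1) : ℝ≥0∞)) atTop :=
    limsup_div_eq_limsup_div_sInf (h.tendsto_retTime_cyl x)
      (tendsto_atTop_mono h.le_q_add_two (tendsto_add_atTop_nat 1))
      (h.eventually_retTime_cyl_mem_range x)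
  refine ⟨hup, ?_⟩
  rw [hup, ENNReal.inv_liminf]
  congr with k
  rw [ENNReal.inv_div (Or.inl (ENNReal.natCast_ne_top _))
    (Or.inl (Nat.cast_ne_zero.2 (Nat.one_le_iff_ne_zero.1 (h.one_le_q_succ (k + 1)))))]

/-- For every `x ∈ 𝕋`,
`R_up(x) = limsup_{k→∞} q_{k+1} / r_k(x) = 1 / liminf_{k→∞} r_k(x) / q_{k+1}`
(as extended reals).  With our indexing, the paper's `q_{k+1}` is `q (k+2)` and
the paper's `r_k(x)` is `rjump α q x (k+1)`. -/
theorem statement1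
    (α : ℝ) (hα : α ∈ Set.Ioo (0 : ℝ) 1) (hirr : Irrational α)
    (a p q : ℕ → ℕ) (ha : ∀ k, 1 ≤ a k)
    -- `a k`, `p (k+1)`, `q (k+1)` are the paper's `a_{k+1}`, `p_k`, `q_k`;
    -- `p 0`, `q 0` are the paper's `p_{-1} = 1`, `q_{-1} = 0`.
    (hq0 : q 0 = 0) (hq1 : q 1 = 1) (hq : ∀ k, q (k + 2) = a k * q (k + 1) + q k)
    (hp0 : p 0 = 1) (hp1 : p 1 = 0) (hp : ∀ k, p (k + 2) = a k * p (k + 1) + p k)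
    -- `a` is the continued fraction expansion of `α`:
    -- the paper's `η_k = (-1)^k (q_k α - p_k)` is positive for all `k ≥ -1`.
    (hcf : ∀ k, 0 < (-1 : ℝ) ^ (k + 1) * ((q k : ℝ) * α - (p k : ℝ)))
    (x : UnitAddCircle) :
    Rup α x =
      limsup (fun k : ℕ => (q (k + 2) : ℝ≥0∞) / (rjump α q x (k + 1) : ℝ≥0∞)) atTop ∧
    Rup α x =
      (liminf (fun k : ℕ => (rjump α q x (k + 1) : ℝ≥0∞) / (q (k + 2) : ℝ≥0∞)) atTop)⁻¹ :=
  statement1_general α hα a p q ha hq0 hq1 hq hp0 hp1 hp hcf x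
end
end

section
/- Every x ∈ 𝕋 satisfies R_low(x) ≥ liminf_{k→∞} q_k/(q_{k+1} + q_k - 1), and there exists a point x ∈ 𝕋 attaining equality; that is, min_{x ∈ 𝕋} R_low(x) = liminf_{k→∞} q_k/(q_{k+1} + q_k - 1). -/
open Filter MeasureTheory Set
open scoped ENNReal
open scoped NNReal

set_option linter.unusedSectionVars false


noncomputable section

namespace St5


/-- `eta α p q k = (-1)^(k+1) (q_k α - p_k)`. -/
def eta (α : ℝ) (p q : ℕ → ℕ) (k : ℕ) : ℝ := (-1) ^ (k + 1) * ((q k : ℝ) * α - (p k : ℝ))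

lemma stepDown {d : ℝ} (hd : 0 < d) : ∀ (N : ℕ) (y z : ℝ), y < z → z ≤ y + d + N * d →
    ∃ t : ℕ, t ≤ N ∧ y < z - t * d ∧ z - t * d ≤ y + d := by
  intro N
  induction N with
  | zero => intro y z h1 h2; exact ⟨0, le_refl 0, by simpa using h1, by push_cast; simpa using h2⟩
  | succ n ih =>
    intro y z h1 h2
    by_cases hc : z ≤ y + d
    · exact ⟨0, by omega, by simpa using h1, by simpa using hc⟩
    · obtain ⟨t, ht, h3, h4⟩ := ih y (z - d) (by linarith) (by push_cast at h2 ⊢; linarith)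
      exact ⟨t + 1, by omega, by push_cast; push_cast at h3; linarith, by push_cast; push_cast at h4; linarith⟩

lemma stepUp {d : ℝ} (hd : 0 < d) : ∀ (N : ℕ) (y z : ℝ), y - N * d < z → z ≤ y + d →
    ∃ t : ℕ, t ≤ N ∧ y < z + t * d ∧ z + t * d ≤ y + d := by
  intro N
  induction N with
  | zero => intro y z h1 h2; exact ⟨0, le_refl 0, by push_cast at h1; simpa using h1, by simpa using h2⟩
  | succ n ih =>
    intro y z h1 h2
    by_cases hc : y < z
    · exact ⟨0, by omega, by simpa using hc, by simpa using h2⟩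
    · obtain ⟨t, ht, h3, h4⟩ := ih y (z + d) (by push_cast at h1 ⊢; linarith) (by linarith)
      exact ⟨t + 1, by omega, by push_cast; push_cast at h3; linarith, by push_cast; push_cast at h4; linarith⟩


/-- Bundle of the standing hypotheses. -/
structure Setup (α : ℝ) (a p q : ℕ → ℕ) : Prop where
  hα : α ∈ Set.Ioo (0:ℝ) 1
  hirr : Irrational α
  ha : ∀ k, 1 ≤ a k
  hq0 : q 0 = 0
  hq1 : q 1 = 1
  hq : ∀ k, q (k+2) = a k * q (k+1) + q k
  hp0 : p 0 = 1
  hp1 : p 1 = 0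
  hp : ∀ k, p (k+2) = a k * p (k+1) + p k
  hcf : ∀ k, 0 < (-1:ℝ)^(k+1) * ((q k:ℝ)*α - (p k:ℝ))

namespace Setup

variable {α : ℝ} {a p q : ℕ → ℕ} (S : Setup α a p q)
include S

lemma q1pos : ∀ k, 1 ≤ q (k + 1) := by
  intro k
  induction k with
  | zero => simpa using S.hq1.ge
  | succ n ih => rw [show n + 1 + 1 = n + 2 from rfl, S.hq n]; nlinarith [S.ha n]

lemma qmono : ∀ k, q (k + 1) ≤ q (k + 2) := by
  intro k
  rw [S.hq k]
  nlinarith [S.ha k, S.q1pos k]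

lemma qmono' : ∀ i j, i ≤ j → q (i + 1) ≤ q (j + 1) := by
  intro i j hij
  induction j with
  | zero => have : i = 0 := by omega
            subst this; rfl
  | succ n ih =>
    rcases Nat.lt_or_ge i (n + 1) with h | h
    · exact le_trans (ih (by omega)) (S.qmono n)
    · have : i = n + 1 := by omega
      subst this; rfl

lemma qstep : ∀ m, q m + 1 ≤ q (m + 2) := by
  intro m; rw [S.hq m]; nlinarith [S.ha m, S.q1pos m]

lemma qgrow : ∀ j, j ≤ q j + q (j + 1) := by
  intro j
  induction j with
  | zero => omega
  | succ n ih =>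
    rcases n with _ | n
    · have := S.q1pos 1
      have := S.q1pos 0
      omega
    · have h1 := S.qstep (n + 1)
      have h3 : q (n + 1 + 2) = q (n + 1 + 1 + 1) := rfl
      omega

lemma etapos : ∀ k, 0 < eta α p q k := S.hcf

lemma eta0 : eta α p q 0 = 1 := by simp [eta, S.hq0, S.hp0]

lemma eta1 : eta α p q 1 = α := by norm_num [eta, S.hq1, S.hp1]

lemma etarec : ∀ k, eta α p q (k+2) = eta α p q k - (a k : ℝ) * eta α p q (k+1) := by
  intro k
  simp only [eta, S.hq k, S.hp k]
  push_cast
  ring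

lemma etadec : ∀ k, eta α p q (k+1) < eta α p q k := by
  intro k
  rcases k with _ | k
  · rw [S.eta0, S.eta1]; exact S.hα.2
  · have h3 := S.etapos (k+3)
    have hrec := S.etarec (k+1)
    have h2 := S.etapos (k+2)
    have ha1 : (1:ℝ) ≤ (a (k+1) : ℝ) := by exact_mod_cast S.ha (k+1)
    have : q (k+1+2) = q (k+3) := rfl
    nlinarith [hrec]

lemma etale : ∀ i j, i ≤ j → eta α p q j ≤ eta α p q i := by
  intro i j hij
  induction j with
  | zero => have : i = 0 := by omega
            subst this; rfl
  | succ n ih =>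
    rcases Nat.lt_or_ge i (n + 1) with h | h
    · exact le_trans (S.etadec n).le (ih (by omega))
    · have : i = n + 1 := by omega
      subst this; rfl

lemma etaub : ∀ i, eta α p q i ≤ eta α p q (i+1) * (a i : ℝ) + eta α p q (i+1) := by
  intro i
  have hrec := S.etarec i
  have := (S.etadec (i+1))
  have h2 : eta α p q (i+2) ≤ eta α p q (i+1) := this.le
  nlinarith

lemma etasmall : ∀ ε : ℝ, 0 < ε → ∃ i, Odd i ∧ eta α p q i < ε := by
  intro ε hε
  have hhalf : ∀ k, eta α p q (k+2) < eta α p q k / 2 := by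
    intro k
    have hrec := S.etarec k
    have h1 := S.etadec (k+1)
    have h2 := S.etapos (k+2)
    have ha1 : (1:ℝ) ≤ (a k : ℝ) := by exact_mod_cast S.ha k
    have h3 := S.etapos (k+1)
    nlinarith
  have hpow : ∀ n : ℕ, eta α p q (2*n+1) ≤ 1 / 2 ^ n := by
    intro n
    induction n with
    | zero =>
      have h : 2*0+1 = 1 := by norm_num
      rw [h, S.eta1]
      norm_num
      linarith [S.hα.2]
    | succ n ih =>
      have : 2*(n+1)+1 = (2*n+1) + 2 := by ring
      rw [this]
      have := hhalf (2*n+1)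
      have : eta α p q (2*n+1+2) < (1/2^n)/2 := by linarith
      calc eta α p q (2*n+1+2) ≤ (1/2^n)/2 := this.le
        _ = 1/2^(n+1) := by rw [pow_succ]; ring
  obtain ⟨n, hn⟩ := exists_pow_lt_of_lt_one hε (by norm_num : (1:ℝ)/2 < 1)
  refine ⟨2*n+1, ⟨n, by ring⟩, lt_of_le_of_lt (hpow n) ?_⟩
  calc (1:ℝ)/2^n = ((1:ℝ)/2)^n := by rw [div_pow]; norm_num
    _ < ε := hn

lemma detq : ∀ k, (q (k+1) : ℤ) * p k - (p (k+1) : ℤ) * q k = (-1)^k := by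
  intro k
  induction k with
  | zero => simp [S.hq0, S.hq1, S.hp0, S.hp1]
  | succ n ih =>
    have e1 : q (n+2) = a n * q (n+1) + q n := S.hq n
    have e2 : p (n+2) = a n * p (n+1) + p n := S.hp n
    have : ((q (n+2) : ℤ)) * p (n+1) - (p (n+2) : ℤ) * q (n+1) = -((q (n+1) : ℤ) * p n - (p (n+1) : ℤ) * q n) := by
      rw [e1, e2]; push_cast; ring
    rw [show n + 1 + 1 = n + 2 from rfl] at *
    rw [this, ih]
    ring


/-- Decomposition of `(k, P)` in the unimodular basis `(q_i,p_i), (q_{i+1},p_{i+1})`. -/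
lemma decomp (i : ℕ) (k P : ℤ) :
    k = ((-1:ℤ)^(i+1) * (k * p (i+1) - P * q (i+1))) * q i
        + ((-1:ℤ)^(i+1) * (P * q i - k * p i)) * q (i+1) ∧
    P = ((-1:ℤ)^(i+1) * (k * p (i+1) - P * q (i+1))) * p i
        + ((-1:ℤ)^(i+1) * (P * q i - k * p i)) * p (i+1) := by
  have hD := S.detq i
  have hsq2 : ((-1:ℤ)^(i*2)) = 1 := Even.neg_one_pow ⟨i, by ring⟩
  constructor
  · linear_combination (((-1:ℤ)^(i+1)) * k) * hD - k * hsq2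
  · linear_combination (((-1:ℤ)^(i+1)) * P) * hD - P * hsq2

/-- `(-1)^{i+1}(kα - P)` expressed in eta-coordinates. -/
lemma etacoord (i : ℕ) (k P : ℤ)
    (u v : ℤ) (hk : k = u * q i + v * q (i+1)) (hP : P = u * p i + v * p (i+1)) :
    (-1:ℝ)^(i+1) * ((k:ℝ) * α - P) = (u:ℝ) * eta α p q i - (v:ℝ) * eta α p q (i+1) := by
  have hkR : (k:ℝ) = (u:ℝ) * q i + (v:ℝ) * q (i+1) := by exact_mod_cast congrArg (Int.cast : ℤ → ℝ) hk
  have hPR : (P:ℝ) = (u:ℝ) * p i + (v:ℝ) * p (i+1) := by exact_mod_cast congrArg (Int.cast : ℤ → ℝ) hP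
  simp only [eta]
  rw [hkR, hPR]
  ring

/-- One-sided best approximation, main side. -/
lemma osb (i : ℕ) (k : ℕ) (hk1 : 1 ≤ k) (hk2 : k < q i + q (i+1)) (P : ℤ)
    (hpos : 0 < (-1:ℝ)^(i+1) * ((k:ℝ) * α - P)) :
    eta α p q i ≤ (-1:ℝ)^(i+1) * ((k:ℝ) * α - P) := by
  obtain ⟨hk, hP⟩ := S.decomp i (k : ℤ) P
  set u : ℤ := (-1:ℤ)^(i+1) * ((k:ℤ) * p (i+1) - P * q (i+1)) with hu
  set v : ℤ := (-1:ℤ)^(i+1) * (P * q i - (k:ℤ) * p i) with hv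
  have hco := S.etacoord i (k:ℤ) P u v hk hP
  rw [Int.cast_natCast] at hco
  rw [hco] at hpos ⊢
  have e1 := S.etapos i
  have e2 := S.etapos (i+1)
  rcases le_or_gt 1 u with hu1 | hu1
  · rcases le_or_gt 1 v with hv1 | hv1
    · exfalso
      have : (k:ℤ) ≥ q i + q (i+1) := by
        rw [hk]
        have h1 : (q i : ℤ) ≤ u * q i := le_mul_of_one_le_left (by positivity) hu1
        have h2 : (q (i+1) : ℤ) ≤ v * q (i+1) := le_mul_of_one_le_left (by positivity) hv1
        omega
      have : (k:ℕ) ≥ q i + q (i+1) := by exact_mod_cast this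
      omega
    · have hv0 : v ≤ 0 := by omega
      have hu1R : (1:ℝ) ≤ (u:ℝ) := by exact_mod_cast hu1
      have hv0R : (v:ℝ) ≤ 0 := by exact_mod_cast hv0
      nlinarith
  · exfalso
    have hu0 : u ≤ 0 := by omega
    have hu0R : (u:ℝ) ≤ 0 := by exact_mod_cast hu0
    have hv1 : v ≤ -1 := by
      by_contra hcon
      have hv0 : 0 ≤ v := by omega
      have hv0R : (0:ℝ) ≤ (v:ℝ) := by exact_mod_cast hv0
      nlinarith
    have : (k:ℤ) ≤ 0 := by
      rw [hk]
      have h1 : u * q i ≤ 0 := mul_nonpos_of_nonpos_of_nonneg hu0 (by positivity)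
      have h2 : v * q (i+1) ≤ -(q (i+1) : ℤ) := by nlinarith [(by positivity : (0:ℤ) ≤ (q (i+1):ℤ))]
      have h3 : (1:ℤ) ≤ (q (i+1) : ℤ) := by exact_mod_cast S.q1pos i
      omega
    omega

/-- One-sided best approximation, reverse side. -/
lemma osbrev (i : ℕ) (k : ℕ) (hk1 : 1 ≤ k) (hk2 : k < q (i+1)) (P : ℤ)
    (hpos : 0 < (-1:ℝ)^i * ((k:ℝ) * α - P)) :
    eta α p q i ≤ (-1:ℝ)^i * ((k:ℝ) * α - P) := by
  obtain ⟨hk, hP⟩ := S.decomp i (k : ℤ) P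
  set u : ℤ := (-1:ℤ)^(i+1) * ((k:ℤ) * p (i+1) - P * q (i+1)) with hu
  set v : ℤ := (-1:ℤ)^(i+1) * (P * q i - (k:ℤ) * p i) with hv
  have hco := S.etacoord i (k:ℤ) P u v hk hP
  rw [Int.cast_natCast] at hco
  have hflip : (-1:ℝ)^i * ((k:ℝ) * α - P) = (v:ℝ) * eta α p q (i+1) - (u:ℝ) * eta α p q i := by
    have : (-1:ℝ)^(i+1) = -(-1:ℝ)^i := by rw [pow_succ]; ring
    rw [this] at hco
    linarith [hco]
  rw [hflip] at hpos ⊢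
  have e1 := S.etapos i
  have e2 := S.etapos (i+1)
  rcases le_or_gt 1 v with hv1 | hv1
  · rcases le_or_gt 0 u with hu0 | hu0
    · exfalso
      have : (k:ℤ) ≥ q (i+1) := by
        rw [hk]
        have h1 : (0:ℤ) ≤ u * q i := mul_nonneg hu0 (by positivity)
        have h2 : (q (i+1) : ℤ) ≤ v * q (i+1) := le_mul_of_one_le_left (by positivity) hv1
        omega
      have : (k:ℕ) ≥ q (i+1) := by exact_mod_cast this
      omega
    · have hu1 : u ≤ -1 := by omega
      have hu1R : (u:ℝ) ≤ -1 := by exact_mod_cast hu1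
      have hv1R : (1:ℝ) ≤ (v:ℝ) := by exact_mod_cast hv1
      nlinarith
  · exfalso
    have hv0 : v ≤ 0 := by omega
    have hv0R : (v:ℝ) ≤ 0 := by exact_mod_cast hv0
    have hu1 : u ≤ -1 := by
      by_contra hcon
      have hu0 : 0 ≤ u := by omega
      have hu0R : (0:ℝ) ≤ (u:ℝ) := by exact_mod_cast hu0
      nlinarith
    have : (k:ℤ) ≤ 0 := by
      rw [hk]
      have h1 : u * q i ≤ 0 := mul_nonpos_of_nonpos_of_nonneg (by omega) (by positivity)
      have h2 : v * q (i+1) ≤ 0 := mul_nonpos_of_nonpos_of_nonneg hv0 (by positivity)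
      omega
    omega

/-- Two-sided best approximation: for `1 ≤ k < q_{i+1}`, `|kα - P| ≥ η_i`. -/
lemma twoSided (i : ℕ) (k : ℕ) (hk1 : 1 ≤ k) (hk2 : k < q (i+1)) (P : ℤ) :
    eta α p q i ≤ |(k:ℝ) * α - P| := by
  have hne : (k:ℝ) * α - P ≠ 0 := by
    intro h
    apply S.hirr
    have hk0 : (k:ℝ) ≠ 0 := by positivity
    have hαP : α = (P:ℝ) / (k:ℝ) := by rw [eq_div_iff hk0]; linarith
    exact ⟨(P:ℚ)/(k:ℚ), by push_cast; exact hαP.symm⟩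
  have hq2 : k < q i + q (i+1) := lt_of_lt_of_le hk2 (by omega)
  rcases lt_or_gt_of_ne hne with hneg | hposs
  · -- kα - P < 0
    rcases Nat.even_or_odd i with he | ho
    · -- i even : (-1)^(i+1) = -1 : (-1)^(i+1)(kα-P) > 0, use osb
      obtain ⟨t, ht⟩ := he
      have hsign : (-1:ℝ)^(i+1) = -1 := Odd.neg_one_pow ⟨t, by omega⟩
      have := S.osb i k hk1 hq2 P (by rw [hsign]; linarith)
      rw [hsign] at this
      rw [abs_of_neg hneg]
      linarith
    · -- i odd : (-1)^i = -1 : use osbrev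
      have hsign : (-1:ℝ)^i = -1 := Odd.neg_one_pow ho
      have := S.osbrev i k hk1 hk2 P (by rw [hsign]; linarith)
      rw [hsign] at this
      rw [abs_of_neg hneg]
      linarith
  · rcases Nat.even_or_odd i with he | ho
    · have hsign : (-1:ℝ)^i = 1 := Even.neg_one_pow he
      have := S.osbrev i k hk1 hk2 P (by rw [hsign]; linarith)
      rw [hsign] at this
      rw [abs_of_pos hposs]
      linarith
    · have hsign : (-1:ℝ)^(i+1) = 1 := Even.neg_one_pow (by simpa using Odd.add_one ho)
      have := S.osb i k hk1 hq2 P (by rw [hsign]; linarith)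
      rw [hsign] at this
      rw [abs_of_pos hposs]
      linarith

/-- Density: every half-open interval `(y, y + η_i]` contains a point `P - mα`
with `m + 1 ≤ q_i + q_{i+1}`. -/
lemma claimA : ∀ i : ℕ, ∀ y : ℝ, ∃ (m : ℕ) (P : ℤ),
    m + 1 ≤ q i + q (i+1) ∧ y < (P:ℝ) - m * α ∧ (P:ℝ) - m * α ≤ y + eta α p q i := by
  intro i
  induction i with
  | zero =>
    intro y
    refine ⟨0, ⌊y⌋ + 1, ?_, ?_, ?_⟩
    · rw [S.hq0, S.hq1]
    · push_cast
      simpa using Int.lt_floor_add_one y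
    · rw [S.eta0]
      push_cast
      have := Int.floor_le y
      linarith
  | succ i ih =>
    intro y
    have e2 := S.etapos (i+1)
    have e1 := S.etapos i
    have hub := S.etaub i
    have haR : (1:ℝ) ≤ (a i : ℝ) := by exact_mod_cast S.ha i
    -- the translation step: adding (q_{i+1}, p_{i+1}) moves the point by -(q_{i+1}α - p_{i+1})
    have hqa : (q (i+1) : ℝ) * α - (p (i+1) : ℝ) = (-1:ℝ)^i * eta α p q (i+1) := by
      simp only [eta]
      rcases Nat.even_or_odd i with he | ho
      · rw [Even.neg_one_pow he, Even.neg_one_pow (by obtain ⟨t,ht⟩ := he; exact ⟨t+1, by omega⟩ : Even (i+2))]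
        ring
      · rw [Odd.neg_one_pow ho, Odd.neg_one_pow (by
          obtain ⟨t, ht⟩ := ho
          exact ⟨t+1, by omega⟩ : Odd (i+2))]
        ring
    rcases Nat.even_or_odd i with he | ho
    · -- i even: points move DOWN by η_{i+1} when index increases by q_{i+1}
      obtain ⟨m, P, hm, hy1, hy2⟩ := ih y
      have hsign : (-1:ℝ)^i = 1 := Even.neg_one_pow he
      rw [hsign, one_mul] at hqa
      obtain ⟨t, ht, hz1, hz2⟩ := stepDown e2 (a i) y ((P:ℝ) - m * α) hy1 (by nlinarith)
      refine ⟨m + t * q (i+1), P + t * p (i+1), ?_, ?_, ?_⟩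
      · have := S.hq i
        nlinarith [hm, ht]
      · push_cast
        have : ((P:ℝ) + t * p (i+1)) - (m + t * q (i+1)) * α
            = ((P:ℝ) - m * α) - t * ((q (i+1) : ℝ) * α - (p (i+1):ℝ)) := by ring
        rw [this, hqa]
        linarith [hz1]
      · push_cast
        have : ((P:ℝ) + t * p (i+1)) - (m + t * q (i+1)) * α
            = ((P:ℝ) - m * α) - t * ((q (i+1) : ℝ) * α - (p (i+1):ℝ)) := by ring
        rw [this, hqa]
        linarith [hz2]
    · -- i odd: points move UP by η_{i+1}
      obtain ⟨m, P, hm, hy1, hy2⟩ := ih (y + eta α p q (i+1) - eta α p q i)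
      have hsign : (-1:ℝ)^i = -1 := Odd.neg_one_pow ho
      rw [hsign] at hqa
      obtain ⟨t, ht, hz1, hz2⟩ := stepUp e2 (a i) y ((P:ℝ) - m * α) (by nlinarith) (by linarith)
      refine ⟨m + t * q (i+1), P + t * p (i+1), ?_, ?_, ?_⟩
      · have := S.hq i
        nlinarith [hm, ht]
      · push_cast
        have : ((P:ℝ) + t * p (i+1)) - (m + t * q (i+1)) * α
            = ((P:ℝ) - m * α) - t * ((q (i+1) : ℝ) * α - (p (i+1):ℝ)) := by ring
        rw [this, hqa]
        push_cast
        linarith [hz1]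
      · push_cast
        have : ((P:ℝ) + t * p (i+1)) - (m + t * q (i+1)) * α
            = ((P:ℝ) - m * α) - t * ((q (i+1) : ℝ) * α - (p (i+1):ℝ)) := by ring
        rw [this, hqa]
        push_cast
        linarith [hz2]

end Setup

section Circle

variable {α : ℝ}

/-- Equality in `UnitAddCircle` in terms of real lifts. -/
lemma coe_eq_coe_iff {r s : ℝ} :
    (r : UnitAddCircle) = (s : UnitAddCircle) ↔ ∃ z : ℤ, r = s + z := by
  rw [QuotientAddGroup.eq_iff_sub_mem]
  constructor
  · intro h
    obtain ⟨z, hz⟩ := AddSubgroup.mem_zmultiples_iff.mp h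
    simp only [zsmul_eq_mul, mul_one] at hz
    exact ⟨z, by linarith⟩
  · rintro ⟨z, hz⟩
    refine AddSubgroup.mem_zmultiples_iff.mpr ⟨z, ?_⟩
    simp only [zsmul_eq_mul, mul_one]
    linarith

lemma iter_rot (α : ℝ) (k : ℕ) (r : ℝ) :
    (rotF α)^[k] (r : UnitAddCircle) = ((r + k * α : ℝ) : UnitAddCircle) := by
  induction k with
  | zero => norm_num
  | succ n ih =>
    rw [Function.iterate_succ_apply', ih]
    show ((r + n * α : ℝ) : UnitAddCircle) + ((α : ℝ) : UnitAddCircle) = _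
    rw [← AddCircle.coe_add]
    push_cast
    ring_nf

lemma mem_I1_iff (hα : α ∈ Set.Ioo (0:ℝ) 1) (r : ℝ) :
    ((r : UnitAddCircle) ∈ I1 α) ↔ 1 - α ≤ Int.fract r := by
  constructor
  · rintro ⟨t, ⟨ht1, ht2⟩, hteq⟩
    obtain ⟨z, hz⟩ := coe_eq_coe_iff.mp hteq
    have : Int.fract t = t := Int.fract_eq_self.mpr ⟨by linarith [hα.2], ht2⟩
    have h2 : Int.fract t = Int.fract r := by rw [hz, Int.fract_add_intCast]
    linarith [h2 ▸ this]
  · intro h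
    exact ⟨Int.fract r, ⟨h, Int.fract_lt_one r⟩, coe_eq_coe_iff.mpr ⟨-⌊r⌋, by
      push_cast
      rw [Int.fract]
      push_cast
      ring⟩⟩

lemma digit_true (hα : α ∈ Set.Ioo (0:ℝ) 1) (u : ℝ) (h : 1 - α ≤ Int.fract u) :
    ⌊u + α⌋ = ⌊u⌋ + 1 := by
  have hf : Int.fract u = u - ⌊u⌋ := rfl
  rw [Int.floor_eq_iff]
  constructor
  · push_cast; linarith
  · push_cast; linarith [Int.fract_lt_one u, hα.2]

lemma digit_false (hα : α ∈ Set.Ioo (0:ℝ) 1) (u : ℝ) (h : ¬ (1 - α ≤ Int.fract u)) :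
    ⌊u + α⌋ = ⌊u⌋ := by
  push_neg at h
  have hf : Int.fract u = u - ⌊u⌋ := rfl
  rw [Int.floor_eq_iff]
  constructor
  · push_cast; linarith [Int.fract_nonneg u, hα.1]
  · push_cast; linarith

lemma digit_iff (hα : α ∈ Set.Ioo (0:ℝ) 1) (u : ℝ) :
    (1 - α ≤ Int.fract u) ↔ ⌊u + α⌋ = ⌊u⌋ + 1 := by
  constructor
  · exact digit_true hα u
  · intro h
    by_contra hc
    rw [digit_false hα u hc] at h
    omega

/-- Floors don't change under a small admissible shift. -/
lemma floor_shift (u t : ℝ) (h1 : 0 ≤ Int.fract u + t) (h2 : Int.fract u + t < 1) :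
    ⌊u + t⌋ = ⌊u⌋ := by
  have hf : Int.fract u = u - ⌊u⌋ := rfl
  rw [Int.floor_eq_iff]
  constructor
  · push_cast; linarith
  · push_cast; linarith

/-- Main characterization of cylinders via floor functions of lifts. -/
lemma mem_cyl_iff (hα : α ∈ Set.Ioo (0:ℝ) 1) (xr : ℝ) (n : ℕ) (y : UnitAddCircle) :
    y ∈ cyl α (xr : UnitAddCircle) n
      ↔ ∃ yr : ℝ, (yr : UnitAddCircle) = y ∧ ∀ m ≤ n, ⌊yr + m * α⌋ = ⌊xr + m * α⌋ := by
  constructor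
  · intro hy
    obtain ⟨yr0, rfl⟩ : ∃ yr0 : ℝ, (yr0 : UnitAddCircle) = y := by
      induction y using QuotientAddGroup.induction_on with
      | H z => exact ⟨z, rfl⟩
    set yr : ℝ := Int.fract yr0 + ⌊xr⌋ with hyr
    have hyy : (yr : UnitAddCircle) = (yr0 : UnitAddCircle) := by
      apply coe_eq_coe_iff.mpr ⟨⌊xr⌋ - ⌊yr0⌋, ?_⟩
      have : Int.fract yr0 = yr0 - ⌊yr0⌋ := rfl
      push_cast
      linarith [this]
    refine ⟨yr, hyy, ?_⟩
    intro m hm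
    induction m with
    | zero =>
      push_cast
      simp only [zero_mul, add_zero]
      rw [hyr, Int.floor_add_intCast, Int.floor_fract]
      omega
    | succ m ih =>
      have ihm := ih (by omega)
      have hdig := hy m (by omega)
      rw [iter_rot α m xr] at hdig
      have hyrw : (rotF α)^[m] ((yr0 : ℝ) : UnitAddCircle) = ((yr + m * α : ℝ) : UnitAddCircle) := by
        rw [← hyy, iter_rot]
      rw [hyrw, mem_I1_iff hα, mem_I1_iff hα] at hdig
      have harr : ∀ w : ℝ, w + (m:ℝ) * α + α = w + ((m:ℕ)+1 : ℕ) * α := by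
        intro w; push_cast; ring
      by_cases hc : 1 - α ≤ Int.fract (yr + m * α)
      · have h1 := digit_true hα (yr + m * α) hc
        have h2 := digit_true hα (xr + m * α) (hdig.mp hc)
        rw [harr] at h1 h2
        omega
      · have h1 := digit_false hα (yr + m * α) hc
        have h2 := digit_false hα (xr + m * α) (fun hcc => hc (hdig.mpr hcc))
        rw [harr] at h1 h2
        omega
  · rintro ⟨yr, rfl, hfl⟩
    intro m hm
    rw [iter_rot α m xr, iter_rot α m yr, mem_I1_iff hα, mem_I1_iff hα,
      digit_iff hα, digit_iff hα]
    have harr : ∀ w : ℝ, w + (m:ℝ) * α + α = w + ((m:ℕ)+1 : ℕ) * α := by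
      intro w; push_cast; ring
    rw [harr, harr]
    have e1 := hfl m (by omega)
    have e2 := hfl (m+1) (by omega)
    constructor <;> intro h <;> omega

lemma image_inter_nonempty {α : ℝ} {M : Set UnitAddCircle} {k : ℕ} :
    ((rotF α)^[k] '' M ∩ M).Nonempty ↔ ∃ y ∈ M, (rotF α)^[k] y ∈ M := by
  constructor
  · rintro ⟨z, ⟨w, hw, rfl⟩, hz⟩; exact ⟨w, hw, hz⟩
  · rintro ⟨y, hy, hyk⟩; exact ⟨_, ⟨y, hy, rfl⟩, hyk⟩

lemma self_mem_cyl (α : ℝ) (x : UnitAddCircle) (n : ℕ) : x ∈ cyl α x n :=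
  fun _ _ => Iff.rfl

end Circle

namespace Setup

variable {α : ℝ} {a p q : ℕ → ℕ} (S : Setup α a p q)
include S

lemma qalpha (i : ℕ) :
    (q (i+1) : ℝ) * α - (p (i+1) : ℝ) = (-1:ℝ)^i * eta α p q (i+1) := by
  simp only [eta]
  rcases Nat.even_or_odd i with he | ho
  · rw [Even.neg_one_pow he,
      Even.neg_one_pow (by obtain ⟨t,ht⟩ := he; exact ⟨t+1, by omega⟩ : Even (i+2))]
    ring
  · rw [Odd.neg_one_pow ho,
      Odd.neg_one_pow (by obtain ⟨t, ht⟩ := ho; exact ⟨t+1, by omega⟩ : Odd (i+2))]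
    ring

lemma fract_pos (K : ℕ) (hK : 1 ≤ K) : 0 < Int.fract ((K:ℝ) * α) := by
  rcases lt_or_eq_of_le (Int.fract_nonneg ((K:ℝ)*α)) with h | h
  · exact h
  · exfalso
    apply S.hirr
    have hfl : (K:ℝ)*α = ⌊(K:ℝ)*α⌋ := by
      have : Int.fract ((K:ℝ)*α) = (K:ℝ)*α - ⌊(K:ℝ)*α⌋ := rfl
      rw [← h] at this
      linarith
    have hk0 : ((K:ℕ):ℝ) ≠ 0 := by positivity
    refine ⟨(⌊(K:ℝ)*α⌋ : ℚ)/(K:ℚ), ?_⟩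
    have : α = (⌊(K:ℝ)*α⌋ : ℝ) / (K:ℝ) := by
      rw [eq_div_iff hk0]; linarith
    push_cast
    exact this.symm

lemma fract_lb (i : ℕ) (hodd : Odd i) (K : ℕ) (hK1 : 1 ≤ K) (hK2 : K < q i + q (i+1)) :
    eta α p q i ≤ Int.fract ((K:ℝ) * α) := by
  have hsign : (-1:ℝ)^(i+1) = 1 := Even.neg_one_pow hodd.add_one
  have hfr : Int.fract ((K:ℝ)*α) = (K:ℝ)*α - ⌊(K:ℝ)*α⌋ := rfl
  have := S.osb i K hK1 hK2 ⌊(K:ℝ)*α⌋ (by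
    rw [hsign, one_mul, ← hfr]
    exact S.fract_pos K hK1)
  rw [hsign, one_mul, ← hfr] at this
  exact this

lemma fract_ub (i : ℕ) (heven : Even i) (K : ℕ) (hK1 : 1 ≤ K) (hK2 : K < q i + q (i+1)) :
    Int.fract ((K:ℝ) * α) ≤ 1 - eta α p q i := by
  have hsign : (-1:ℝ)^(i+1) = -1 := Odd.neg_one_pow heven.add_one
  have hfr : Int.fract ((K:ℝ)*α) = (K:ℝ)*α - ⌊(K:ℝ)*α⌋ := rfl
  have hlt : Int.fract ((K:ℝ)*α) < 1 := Int.fract_lt_one _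
  have := S.osb i K hK1 hK2 (⌊(K:ℝ)*α⌋ + 1) (by
    rw [hsign]
    push_cast
    nlinarith [hfr, hlt])
  rw [hsign] at this
  push_cast at this
  nlinarith [hfr]

lemma retSet_nonempty (x : UnitAddCircle) (n : ℕ) :
    {k : ℕ | 1 ≤ k ∧ ((rotF α)^[k] '' (cyl α x n) ∩ (cyl α x n)).Nonempty}.Nonempty := by
  induction x using QuotientAddGroup.induction_on with
  | H xr =>
  have hδ : ∀ N : ℕ, ∃ δ : ℝ, 0 < δ ∧ ∀ m ≤ N, Int.fract (xr + m * α) + δ ≤ 1 := by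
    intro N
    induction N with
    | zero =>
      refine ⟨1 - Int.fract xr, by linarith [Int.fract_lt_one xr], ?_⟩
      intro m hm
      have : m = 0 := by omega
      subst this
      push_cast
      simp only [zero_mul, add_zero]
      linarith
    | succ N ih =>
      obtain ⟨δ, hδpos, hall⟩ := ih
      refine ⟨min δ (1 - Int.fract (xr + ((N+1 : ℕ):ℝ) * α)), ?_, ?_⟩
      · apply lt_min hδpos
        linarith [Int.fract_lt_one (xr + ((N+1 : ℕ):ℝ) * α)]
      · intro m hm
        rcases Nat.lt_or_ge m (N+1) with h | h
        · have := hall m (by omega)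
          have := min_le_left δ (1 - Int.fract (xr + ((N+1 : ℕ):ℝ) * α))
          linarith
        · have hmeq : m = N + 1 := by omega
          subst hmeq
          have := min_le_right δ (1 - Int.fract (xr + ((N+1 : ℕ):ℝ) * α))
          linarith
  obtain ⟨δ, hδpos, hall⟩ := hδ n
  obtain ⟨i, hodd, hsmall⟩ := S.etasmall δ hδpos
  obtain ⟨t, ht⟩ := hodd
  have hi1 : 1 ≤ i := by omega
  have hqi : 1 ≤ q i := by
    obtain ⟨i', rfl⟩ : ∃ i', i = i' + 1 := ⟨i - 1, by omega⟩
    exact S.q1pos i'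
  refine ⟨q i, ⟨hqi, image_inter_nonempty.mpr ⟨(xr : UnitAddCircle), self_mem_cyl α _ n, ?_⟩⟩⟩
  rw [iter_rot]
  have hetai : eta α p q i = (q i : ℝ) * α - (p i : ℝ) := by
    simp only [eta]
    rw [Even.neg_one_pow (⟨t+1, by omega⟩ : Even (i+1)), one_mul]
  apply (mem_cyl_iff S.hα xr n _).mpr ⟨xr + eta α p q i, ?_, ?_⟩
  · exact coe_eq_coe_iff.mpr ⟨-(p i), by rw [hetai]; push_cast; ring⟩
  · intro m hm
    have : xr + eta α p q i + (m:ℝ) * α = (xr + (m:ℝ)*α) + eta α p q i := by ring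
    rw [this]
    apply floor_shift
    · have := Int.fract_nonneg (xr + (m:ℝ)*α)
      have := S.etapos i
      linarith
    · have := hall m hm
      linarith

lemma ret_lb (x : UnitAddCircle) (n j : ℕ) (hn : q j + q (j+1) ≤ n + 1) :
    q (j+1) ≤ retTime α (cyl α x n) := by
  induction x using QuotientAddGroup.induction_on with
  | H xr =>
  apply le_csInf (S.retSet_nonempty _ n)
  rintro b ⟨hb1, hbne⟩
  by_contra hcon
  push_neg at hcon
  obtain ⟨y, hy, hyk⟩ := image_inter_nonempty.mp hbne
  obtain ⟨wr, hwr, hwf⟩ := (mem_cyl_iff S.hα xr n y).mp hy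
  have hiter : (rotF α)^[b] y = ((wr + b * α : ℝ) : UnitAddCircle) := by
    rw [← hwr, iter_rot]
  rw [hiter] at hyk
  obtain ⟨zr, hzr, hzf⟩ := (mem_cyl_iff S.hα xr n _).mp hyk
  obtain ⟨z0, hz0⟩ := coe_eq_coe_iff.mp hzr
  have habs : eta α p q j ≤ |zr - wr| := by
    have := S.twoSided j b hb1 hcon (-z0)
    have harr : (b:ℝ) * α - (-z0 : ℤ) = zr - wr := by push_cast; push_cast at hz0; linarith
    rwa [harr] at this
  have aux : ∀ w z : ℝ, (∀ m ≤ n, ⌊w + m * α⌋ = ⌊xr + m * α⌋) →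
      (∀ m ≤ n, ⌊z + m * α⌋ = ⌊xr + m * α⌋) → eta α p q j ≤ z - w → False := by
    intro w z hwf' hzf' hd
    obtain ⟨m, P, hmb, h1, h2⟩ := S.claimA j (z - eta α p q j)
    have hm : m ≤ n := by omega
    have g1 : ⌊w + m * α⌋ < P := Int.floor_lt.mpr (by push_cast; push_cast at h1; linarith)
    have g2 : P ≤ ⌊z + m * α⌋ := Int.le_floor.mpr (by push_cast; push_cast at h2; linarith)
    have f1 := hwf' m hm
    have f2 := hzf' m hm
    omega
  rcases abs_cases (zr - wr) with ⟨he, _⟩ | ⟨he, _⟩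
  · exact aux wr zr hwf hzf (by linarith [habs, he])
  · exact aux zr wr hzf hwf (by linarith [habs, he])

lemma ret_ub (k : ℕ) :
    retTime α (cyl α ((α : ℝ) : UnitAddCircle) (q (k+2) + q (k+1) - 2)) ≤ q (k+1) := by
  have hq1 : 1 ≤ q (k+1) := S.q1pos k
  have hq2 : 1 ≤ q (k+2) := S.q1pos (k+1)
  have hq3 : q (k+1) ≤ q (k+3) := S.qmono' k (k+2) (by omega)
  set n := q (k+2) + q (k+1) - 2 with hn
  have e1 := S.etapos (k+1)
  have e2 := S.etapos (k+2)
  have edec := S.etadec (k+1)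
  -- membership of arc points in the cylinder
  have hmem : ∀ t : ℝ,
      (Even k → -eta α p q (k+1) ≤ t ∧ t < eta α p q (k+2)) →
      (Odd k → -eta α p q (k+2) ≤ t ∧ t < eta α p q (k+1)) →
      ((α + t : ℝ) : UnitAddCircle) ∈ cyl α ((α : ℝ) : UnitAddCircle) n := by
    intro t ht1 ht2
    apply (mem_cyl_iff S.hα α n _).mpr ⟨α + t, rfl, ?_⟩
    intro m hm
    have hK1 : 1 ≤ m + 1 := by omega
    have hKb : m + 1 < q (k+1) + q (k+2) := by omega
    have hKb' : m + 1 < q (k+2) + q (k+3) := by omega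
    rw [show α + t + (m:ℝ) * α = ((m+1 : ℕ):ℝ) * α + t by push_cast; ring,
        show α + (m:ℝ) * α = ((m+1 : ℕ):ℝ) * α by push_cast; ring]
    apply floor_shift
    all_goals rcases Nat.even_or_odd k with he | ho
    · obtain ⟨hta, htb⟩ := ht1 he
      have hlow := S.fract_lb (k+1) he.add_one (m+1) hK1 hKb
      linarith
    · obtain ⟨hta, htb⟩ := ht2 ho
      have hlow := S.fract_lb (k+2) (by obtain ⟨u,hu⟩ := ho; exact ⟨u+1, by omega⟩) (m+1) hK1 hKb'
      linarith
    · obtain ⟨hta, htb⟩ := ht1 he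
      have hup := S.fract_ub (k+2) (by obtain ⟨u,hu⟩ := he; exact ⟨u+1, by omega⟩) (m+1) hK1 hKb'
      linarith
    · obtain ⟨hta, htb⟩ := ht2 ho
      have hup := S.fract_ub (k+1) ho.add_one (m+1) hK1 hKb
      linarith
  have hqa := S.qalpha k
  apply Nat.sInf_le
  refine ⟨hq1, image_inter_nonempty.mpr ?_⟩
  rcases Nat.even_or_odd k with he | ho
  · -- k even : q_{k+1} α = p_{k+1} + η_{k+1}
    have hsign : (-1:ℝ)^k = 1 := Even.neg_one_pow he
    rw [hsign, one_mul] at hqa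
    refine ⟨((α + -eta α p q (k+1) : ℝ) : UnitAddCircle), ?_, ?_⟩
    · exact hmem _ (fun _ => ⟨le_refl _, by linarith⟩)
        (fun ho => ((Nat.not_odd_iff_even.mpr he) ho).elim)
    · rw [iter_rot]
      have : ((α + -eta α p q (k+1) + (q (k+1) : ℝ) * α : ℝ) : UnitAddCircle)
          = ((α + 0 : ℝ) : UnitAddCircle) := by
        apply coe_eq_coe_iff.mpr ⟨p (k+1), by push_cast; linarith [hqa]⟩
      rw [this]
      exact hmem 0 (fun _ => ⟨by linarith, by linarith⟩)
        (fun ho => ((Nat.not_odd_iff_even.mpr he) ho).elim)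
  · -- k odd : q_{k+1} α = p_{k+1} - η_{k+1}
    have hsign : (-1:ℝ)^k = -1 := Odd.neg_one_pow ho
    rw [hsign] at hqa
    refine ⟨((α + (eta α p q (k+1) - eta α p q (k+2)) : ℝ) : UnitAddCircle), ?_, ?_⟩
    · exact hmem _ (fun he => ((Nat.not_odd_iff_even.mpr he) ho).elim)
        (fun _ => ⟨by linarith, by linarith⟩)
    · rw [iter_rot]
      have : ((α + (eta α p q (k+1) - eta α p q (k+2)) + (q (k+1) : ℝ) * α : ℝ) : UnitAddCircle)
          = ((α + -eta α p q (k+2) : ℝ) : UnitAddCircle) := by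
        apply coe_eq_coe_iff.mpr ⟨p (k+1), by push_cast; linarith [hqa]⟩
      rw [this]
      exact hmem _ (fun he => ((Nat.not_odd_iff_even.mpr he) ho).elim)
        (fun _ => ⟨le_refl _, by linarith⟩)

lemma qgrow' : ∀ j, j + 1 ≤ q j + q (j + 1) := by
  intro j
  induction j with
  | zero => have := S.q1pos 0; omega
  | succ n ih =>
    rcases n with _ | n
    · have := S.q1pos 1
      have := S.q1pos 0
      have h2 := S.qstep 0
      have e1 : q (0 + 2) = q (1 + 1) := rfl
      have e2 : q (0 + 1 + 1) = q (1 + 1) := rfl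
      omega
    · have h1 := S.qstep (n + 1)
      have h0 := S.qstep n
      have h3 : q (n + 1 + 2) = q (n + 1 + 1 + 1) := rfl
      have h4 : q (n + 2) = q (n + 1 + 1) := rfl
      omega

end Setup

lemma rdiv_step (A n : ℝ) (hn : 1 ≤ n) (hA0 : 0 ≤ A) (hA : A ≤ n + 1) :
    A / n ≤ A / (n + 1) + 1 / n := by
  have h1 : (0:ℝ) < n := by linarith
  have h2 : (0:ℝ) < n + 1 := by linarith
  rw [div_add_div _ _ (ne_of_gt h2) (ne_of_gt h1), div_le_div_iff₀ h1 (by positivity)]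
  nlinarith

lemma ediv_step (A n : ℕ) (hn : 1 ≤ n) (hA : A ≤ n + 1) :
    (A : ℝ≥0∞) / (n : ℝ≥0∞) ≤ (A : ℝ≥0∞) / (((n + 1 : ℕ)) : ℝ≥0∞) + 1 / (n : ℝ≥0∞) := by
  have hn0 : ((n:ℕ) : ℝ≥0) ≠ 0 := Nat.cast_ne_zero.mpr (by omega)
  have hn10 : (((n+1:ℕ)) : ℝ≥0) ≠ 0 := Nat.cast_ne_zero.mpr (by omega)
  rw [show ((A:ℕ):ℝ≥0∞) = (((A:ℕ):ℝ≥0) : ℝ≥0∞) by simp,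
      show ((n:ℕ):ℝ≥0∞) = (((n:ℕ):ℝ≥0) : ℝ≥0∞) by simp,
      show (((n+1:ℕ)):ℝ≥0∞) = ((((n+1:ℕ)):ℝ≥0) : ℝ≥0∞) by simp,
      show (1:ℝ≥0∞) = ((1:ℝ≥0):ℝ≥0∞) by simp,
      ← ENNReal.coe_div hn0, ← ENNReal.coe_div hn10, ← ENNReal.coe_div hn0,
      ← ENNReal.coe_add, ENNReal.coe_le_coe, ← NNReal.coe_le_coe]
  push_cast
  exact rdiv_step A n (by exact_mod_cast hn) (by positivity) (by exact_mod_cast hA)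

lemma liminf_add_const (u : ℕ → ℝ≥0∞) (c : ℝ≥0∞) :
    liminf (fun k => u k + c) atTop ≤ liminf u atTop + c := by
  rw [liminf_eq_iSup_iInf_of_nat, liminf_eq_iSup_iInf_of_nat, ENNReal.iSup_add]
  apply iSup_mono
  intro N
  have : (⨅ i, ⨅ _ : N ≤ i, u i) + c = ⨅ i, ⨅ _ : N ≤ i, (u i + c) := by
    rw [ENNReal.iInf_add]
    exact iInf_congr (fun i => by rw [ENNReal.iInf_add])
  rw [this]

lemma liminf_subseq (u : ℕ → ℝ≥0∞) (φ : ℕ → ℕ) (hφ : Tendsto φ atTop atTop) :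
    liminf u atTop ≤ liminf (fun k => u (φ k)) atTop := by
  have h1 : liminf (fun k => u (φ k)) atTop = liminf u (Filter.map φ atTop) := by
    simp only [Filter.liminf, Filter.map_map]
    rfl
  rw [h1]
  exact Filter.liminf_le_liminf_of_le hφ

lemma main_lb {α : ℝ} {a p q : ℕ → ℕ} (S : Setup α a p q) (x : UnitAddCircle) :
    liminf (fun k : ℕ =>
      (q (k + 1) : ℝ≥0∞) / ((q (k + 2) + q (k + 1) - 1 : ℕ) : ℝ≥0∞)) atTop ≤ Rlow α x := by
  set T : ℕ → ℝ≥0∞ :=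
    fun k => (q (k + 1) : ℝ≥0∞) / ((q (k + 2) + q (k + 1) - 1 : ℕ) : ℝ≥0∞) with hT
  rw [Filter.liminf_eq_iSup_iInf_of_nat]
  apply iSup_le
  intro N
  refine Filter.le_liminf_of_le (by isBoundedDefault) ?_
  filter_upwards [Filter.eventually_ge_atTop (q N + q (N + 1))] with n hn
  set j := Nat.findGreatest (fun j => q j + q (j + 1) ≤ n + 1) (n + 1) with hj
  have hP0 : q 0 + q (0 + 1) ≤ n + 1 := by
    have : q (0+1) = q 1 := rfl
    rw [S.hq0, this, S.hq1]
    omega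
  have hPj : q j + q (j + 1) ≤ n + 1 := by
    rw [hj]
    exact Nat.findGreatest_spec (P := fun i => q i + q (i + 1) ≤ n + 1) (m := 0)
      (Nat.zero_le (n+1)) hP0
  have hjn : j ≤ n := by
    have := S.qgrow' j
    omega
  have hjN : N ≤ j := Nat.le_findGreatest (by have := S.qgrow' N; omega) (by omega)
  have hmax : ¬ (q (j + 1) + q (j + 1 + 1) ≤ n + 1) :=
    Nat.findGreatest_is_greatest (P := fun j => q j + q (j + 1) ≤ n + 1) (n := n + 1)
      (k := j + 1) (by omega) (by omega)
  have hτ := S.ret_lb x n j hPj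
  have hden : n ≤ q (j + 2) + q (j + 1) - 1 := by
    have e : q (j+1+1) = q (j+2) := rfl
    omega
  calc (⨅ i, ⨅ _ : i ≥ N, T i) ≤ T j := iInf₂_le j hjN
    _ ≤ (retTime α (cyl α x n) : ℝ≥0∞) / (n : ℝ≥0∞) :=
        ENNReal.div_le_div (Nat.cast_le.mpr hτ) (Nat.cast_le.mpr hden)

lemma main_ub {α : ℝ} {a p q : ℕ → ℕ} (S : Setup α a p q) :
    Rlow α ((α : ℝ) : UnitAddCircle) ≤ liminf (fun k : ℕ =>
      (q (k + 1) : ℝ≥0∞) / ((q (k + 2) + q (k + 1) - 1 : ℕ) : ℝ≥0∞)) atTop := by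
  set T : ℕ → ℝ≥0∞ :=
    fun k => (q (k + 1) : ℝ≥0∞) / ((q (k + 2) + q (k + 1) - 1 : ℕ) : ℝ≥0∞) with hT
  set φ : ℕ → ℕ := fun k => q (k + 2) + q (k + 1) - 2 with hφdef
  have hφk : ∀ k, φ k = q (k + 2) + q (k + 1) - 2 := fun k => by rw [hφdef]
  have hφge : ∀ k, k ≤ φ k := by
    intro k
    have := S.qgrow' (k + 1)
    have e : q (k+1+1) = q (k+2) := rfl
    have h2 := hφk k
    omega
  have hφ : Tendsto φ atTop atTop := tendsto_atTop_mono hφge tendsto_id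
  refine le_trans (liminf_subseq _ φ hφ) ?_
  apply ENNReal.le_of_forall_pos_le_add
  intro ε hε hfin
  have h0 : Tendsto (fun k => (φ k : ℝ≥0∞)⁻¹) atTop (nhds 0) :=
    ENNReal.tendsto_inv_nat_nhds_zero.comp hφ
  have hevε : ∀ᶠ k in atTop, (φ k : ℝ≥0∞)⁻¹ < (ε : ℝ≥0∞) :=
    h0.eventually_lt_const (ENNReal.coe_pos.mpr hε)
  have hev : ∀ᶠ k in atTop,
      (retTime α (cyl α ((α:ℝ) : UnitAddCircle) (φ k)) : ℝ≥0∞) / ((φ k : ℕ) : ℝ≥0∞)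
        ≤ T k + (ε : ℝ≥0∞) := by
    filter_upwards [hevε, Filter.eventually_ge_atTop 1] with k hkε hk1
    have hφ1 : 1 ≤ φ k := le_trans hk1 (hφge k)
    have hq1 := S.q1pos k
    have hq2 := S.q1pos (k + 1)
    have hφkk := hφk k
    have e : q (k+1+1) = q (k+2) := rfl
    have hn1 : φ k + 1 = q (k+2) + q (k+1) - 1 := by omega
    have hAn : q (k+1) ≤ φ k + 1 := by omega
    calc (retTime α (cyl α ((α:ℝ) : UnitAddCircle) (φ k)) : ℝ≥0∞) / ((φ k : ℕ) : ℝ≥0∞)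
        ≤ (q (k+1) : ℝ≥0∞) / ((φ k : ℕ) : ℝ≥0∞) :=
          ENNReal.div_le_div (Nat.cast_le.mpr (S.ret_ub k)) le_rfl
      _ ≤ (q (k+1) : ℝ≥0∞) / (((φ k + 1 : ℕ)) : ℝ≥0∞) + 1 / ((φ k : ℕ) : ℝ≥0∞) :=
          ediv_step _ _ hφ1 hAn
      _ ≤ T k + (ε : ℝ≥0∞) := by
          rw [hn1]
          apply add_le_add le_rfl
          rw [one_div]
          exact le_of_lt hkε
  calc liminf (fun k =>
      (retTime α (cyl α ((α:ℝ) : UnitAddCircle) (φ k)) : ℝ≥0∞) / ((φ k : ℕ) : ℝ≥0∞)) atTop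
      ≤ liminf (fun k => T k + (ε : ℝ≥0∞)) atTop := Filter.liminf_le_liminf hev
    _ ≤ liminf T atTop + (ε : ℝ≥0∞) := liminf_add_const T _

end St5

/-- Every `x ∈ 𝕋` satisfies
`R_low(x) ≥ liminf_{k→∞} q_k / (q_{k+1} + q_k - 1)`, and some `x ∈ 𝕋` attains equality;
that is, `min_x R_low(x) = liminf_{k→∞} q_k / (q_{k+1} + q_k - 1)`.
With our indexing the paper's `q_k`, `q_{k+1}` are `q (k+1)`, `q (k+2)`. -/
theorem statement5
    (α : ℝ) (hα : α ∈ Set.Ioo (0 : ℝ) 1) (hirr : Irrational α)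
    (a p q : ℕ → ℕ) (ha : ∀ k, 1 ≤ a k)
    -- `a k`, `p (k+1)`, `q (k+1)` are the paper's `a_{k+1}`, `p_k`, `q_k`;
    -- `p 0`, `q 0` are the paper's `p_{-1} = 1`, `q_{-1} = 0`.
    (hq0 : q 0 = 0) (hq1 : q 1 = 1) (hq : ∀ k, q (k + 2) = a k * q (k + 1) + q k)
    (hp0 : p 0 = 1) (hp1 : p 1 = 0) (hp : ∀ k, p (k + 2) = a k * p (k + 1) + p k)
    -- `a` is the continued fraction expansion of `α`:
    -- the paper's `η_k = (-1)^k (q_k α - p_k)` is positive for all `k ≥ -1`.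
    (hcf : ∀ k, 0 < (-1 : ℝ) ^ (k + 1) * ((q k : ℝ) * α - (p k : ℝ)))
    :
    (∀ x : UnitAddCircle,
      liminf (fun k : ℕ =>
        (q (k + 1) : ℝ≥0∞) / ((q (k + 2) + q (k + 1) - 1 : ℕ) : ℝ≥0∞)) atTop ≤ Rlow α x) ∧
    (∃ x : UnitAddCircle,
      Rlow α x =
        liminf (fun k : ℕ =>
          (q (k + 1) : ℝ≥0∞) / ((q (k + 2) + q (k + 1) - 1 : ℕ) : ℝ≥0∞)) atTop) := by
  have S : St5.Setup α a p q := ⟨hα, hirr, ha, hq0, hq1, hq, hp0, hp1, hp, hcf⟩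
  exact ⟨fun x => St5.main_lb S x,
    ⟨((α : ℝ) : UnitAddCircle), le_antisymm (St5.main_ub S) (St5.main_lb S _)⟩⟩
end
end

section
/- Every x ∈ 𝕋 satisfies R_up(x) ≤ limsup_{k→∞} q_{k+1}/q_k (as extended reals in [0,∞]), and there exists a point x ∈ 𝕋 attaining equality; that is, max_{x ∈ 𝕋} R_up(x) = limsup_{k→∞} q_{k+1}/q_k. -/
/-!
Lift everything to `ℝ`. The cylinder `I_{x,n}` is the set of points whose orbit crosses the same
integers as the orbit of `x` up to time `n`: an interval `[L, R)` whose endpoints have the form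
`m - jα` with `j ≤ n`. An arc of length `ℓ` first returns at the least `m ≥ 1` with `‖mα‖ < ℓ`.

Upper bound: if `q_k ≤ n < q_{k+1}`, then `R - L = |mα - e| ≠ 0` for some integers `m`, `e` with
`|m| ≤ n`, so the best approximation property of convergents gives
`R - L ≥ η_k > η_{k+1} = ‖q_{k+1} α‖`. Hence `τ(I_{x,n}) ≤ q_{k+1}` and
`τ(I_{x,n}) / n ≤ q_{k+1} / q_k`.

Lower bound: an arc of length `η_k` with endpoints `-bα` and `-(b + q_k)α` contains the cylinder of
depth `b + q_k` of each of its points, so that cylinder returns no earlier than `q_{k+1}`. Such an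
arc contains the point `-(b + q_{k+2})α` far from its ends, which anchors a strictly smaller arc of
any level beyond `k + 2`. Nesting these arcs along levels `k_i` with `q_{k_i+1}/q_{k_i}` close to
the limsup and `b_i ≤ q_{k_i} / i` gives a point `x` with
`τ(I_{x,n_i}) / n_i ≥ (q_{k_i+1}/q_{k_i}) · i/(i+1)` at the depths `n_i = b_i + q_{k_i}`.
-/

open Filter MeasureTheory Set
open scoped ENNReal

noncomputable section

open Topology

lemma ne_zero_and_mul_nonpos_of_abs_add_lt {x y Q Q' : ℤ} (hQ' : 0 < Q')
    (h : |x * Q + y * Q'| < Q) (hxy : x ≠ 0 ∨ y ≠ 0) : y ≠ 0 ∧ x * y ≤ 0 := by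
  obtain ⟨h1, h2⟩ := abs_lt.1 h
  refine ⟨fun hy => ?_, ?_⟩
  · subst hy
    rcases lt_trichotomy x 0 with hx | hx | hx
    · nlinarith
    · simp_all
    · nlinarith
  · by_contra! hpos
    rcases lt_or_gt_of_ne (left_ne_zero_of_mul hpos.ne') with hx | hx
    · have hy : y < 0 := by nlinarith
      nlinarith
    · have hy : 0 < y := by nlinarith
      nlinarith

lemma le_abs_intCast_mul_sub {A B : ℝ} (hA : 0 ≤ A) (hB : 0 ≤ B) {x y : ℤ} (hy : y ≠ 0)
    (hxy : x * y ≤ 0) : B ≤ |x * A - y * B| := by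
  rcases lt_or_gt_of_ne hy with hy | hy
  · have hx : (0 : ℝ) ≤ x := by exact_mod_cast nonneg_of_mul_nonpos_left hxy hy
    have hy' : (y : ℝ) ≤ -1 := by exact_mod_cast Int.le_sub_one_of_lt hy
    exact le_abs.2 (Or.inl (by nlinarith))
  · have hx : (x : ℝ) ≤ 0 := by exact_mod_cast nonpos_of_mul_nonpos_left hxy hy
    have hy' : (1 : ℝ) ≤ y := by exact_mod_cast hy
    exact le_abs.2 (Or.inr (by nlinarith))

lemma exists_forall_mem_Ico_of_monotone_of_strictAnti {c r : ℕ → ℝ} (hc : Monotone c)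
    (hr : StrictAnti r) (hcr : ∀ i, c i ≤ r i) : ∃ x, ∀ i, x ∈ Ico (c i) (r i) := by
  have hx := mem_iInter.1 (hc.ciSup_mem_iInter_Icc_of_antitone hr.antitone hcr)
  exact ⟨⨆ i, c i, fun i => ⟨(hx i).1, (hx (i + 1)).2.trans_lt (hr i.lt_succ_self)⟩⟩

lemma ENNReal.tendsto_inv_one_add_inv_natCast :
    Tendsto (fun i : ℕ => (1 + (i : ℝ≥0∞)⁻¹)⁻¹) atTop (𝓝 1) := by
  have := (tendsto_const_nhds (x := (1 : ℝ≥0∞))).add ENNReal.tendsto_inv_nat_nhds_zero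
  simpa using tendsto_inv_iff.2 this

lemma ENNReal.natCast_div_mul_inv_one_add_inv_le {Q q b i : ℕ} (hq : q ≠ 0) (hb : i * b ≤ q) :
    (Q / q : ℝ≥0∞) * (1 + (i : ℝ≥0∞)⁻¹)⁻¹ ≤ Q / (b + q : ℕ) := by
  have hN : ((b + q : ℕ) : ℝ≥0∞) ≤ q * (1 + (i : ℝ≥0∞)⁻¹) := by
    rw [mul_add, mul_one, Nat.cast_add, add_comm]
    gcongr
    rw [← div_eq_mul_inv, ENNReal.le_div_iff_mul_le (by simp [hq]) (by simp), mul_comm]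
    exact_mod_cast hb
  calc (Q / q : ℝ≥0∞) * (1 + (i : ℝ≥0∞)⁻¹)⁻¹ = Q / (q * (1 + (i : ℝ≥0∞)⁻¹)) := by
        rw [div_eq_mul_inv, div_eq_mul_inv, mul_assoc, ENNReal.mul_inv (by simp [hq]) (by simp)]
    _ ≤ Q / (b + q : ℕ) := ENNReal.div_le_div_left hN _

namespace CircleRotation

lemma coe_eq_coe_iff {s t : ℝ} : (s : UnitAddCircle) = t ↔ ∃ m : ℤ, t - s = m := by
  rw [eq_comm, ← sub_eq_zero, ← AddCircle.coe_sub, AddCircle.coe_eq_zero_iff]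
  simp only [zsmul_one, eq_comm]

lemma rotF_iterate_coe (α t : ℝ) (k : ℕ) :
    (rotF α)^[k] (t : UnitAddCircle) = ((t + k * α : ℝ) : UnitAddCircle) := by
  induction k with
  | zero => simp
  | succ k ih =>
    rw [Function.iterate_succ_apply', ih, rotF, ← AddCircle.coe_add]
    push_cast
    ring_nf

variable {α : ℝ}

lemma floor_add_eq_or (hα : α ∈ Ioo 0 1) (t : ℝ) : ⌊t + α⌋ = ⌊t⌋ ∨ ⌊t + α⌋ = ⌊t⌋ + 1 := by
  have h1 : ⌊t⌋ ≤ ⌊t + α⌋ := Int.floor_le_floor (by linarith [hα.1])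
  have h2 : ⌊t + α⌋ ≤ ⌊t⌋ + 1 := by
    rw [Int.floor_le_iff]
    push_cast
    linarith [Int.lt_floor_add_one t, hα.2]
  omega

lemma coe_mem_I1_iff (hα : α ∈ Ioo 0 1) (t : ℝ) :
    (t : UnitAddCircle) ∈ I1 α ↔ ⌊t + α⌋ = ⌊t⌋ + 1 := by
  have hfract : 1 - α ≤ Int.fract t ↔ ⌊t + α⌋ = ⌊t⌋ + 1 := by
    rw [Int.floor_eq_iff, Int.fract]
    push_cast
    constructor
    · intro h
      exact ⟨by linarith, by linarith [Int.lt_floor_add_one t, hα.2]⟩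
    · intro h
      linarith [h.1]
  rw [← hfract, I1, ← AddCircle.coe_fract]
  constructor
  · rintro ⟨s, hs, hst⟩
    have hs' : s ∈ Ico (0 : ℝ) (0 + 1) := ⟨by linarith [hs.1, hα.2], by linarith [hs.2]⟩
    have ht' : Int.fract t ∈ Ico (0 : ℝ) (0 + 1) :=
      ⟨Int.fract_nonneg t, by linarith [Int.fract_lt_one t]⟩
    rw [AddCircle.coe_eq_coe_iff_of_mem_Ico hs' ht'] at hst
    exact hst ▸ hs.1
  · exact fun h => ⟨_, ⟨h, Int.fract_lt_one t⟩, rfl⟩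

lemma floor_add_eq_iff (hα : α ∈ Ioo 0 1) {s t : ℝ} (h : ⌊s⌋ = ⌊t⌋) :
    ⌊s + α⌋ = ⌊t + α⌋ ↔ (⌊s + α⌋ = ⌊s⌋ + 1 ↔ ⌊t + α⌋ = ⌊t⌋ + 1) := by
  rcases floor_add_eq_or hα s with hs | hs <;> rcases floor_add_eq_or hα t with ht | ht <;>
    omega

lemma coding_eq_iff_floor_eq (hα : α ∈ Ioo 0 1) {x y : ℝ} (hxy : ⌊y⌋ = ⌊x⌋) (n : ℕ) :
    (∀ k < n, (((y + k * α : ℝ) : UnitAddCircle) ∈ I1 α ↔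
      ((x + k * α : ℝ) : UnitAddCircle) ∈ I1 α)) ↔
    ∀ j < n + 1, ⌊y + j * α⌋ = ⌊x + j * α⌋ := by
  induction n with
  | zero => simpa using hxy
  | succ n ih =>
    rw [Nat.forall_lt_succ_right, ih, Nat.forall_lt_succ_right (n := n + 1)]
    refine and_congr_right fun hfloor => ?_
    rw [coe_mem_I1_iff hα, coe_mem_I1_iff hα, ← floor_add_eq_iff hα (hfloor n n.lt_succ_self)]
    push_cast
    ring_nf

/-- `[cylLeft α x n, cylRight α x n)` is the set of `y` with `⌊y + jα⌋ = ⌊x + jα⌋` for all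
`j ≤ n`, which lifts the cylinder `I_{x,n}`. -/
def cylLeft (α x : ℝ) (n : ℕ) : ℝ :=
  (Finset.range (n + 1)).sup' Finset.nonempty_range_add_one fun j => ⌊x + j * α⌋ - j * α

def cylRight (α x : ℝ) (n : ℕ) : ℝ :=
  (Finset.range (n + 1)).inf' Finset.nonempty_range_add_one fun j => ⌊x + j * α⌋ + 1 - j * α

lemma mem_Ico_cylLeft_cylRight_iff {x y : ℝ} {n : ℕ} :
    y ∈ Ico (cylLeft α x n) (cylRight α x n) ↔ ∀ j < n + 1, ⌊y + j * α⌋ = ⌊x + j * α⌋ := by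
  simp only [mem_Ico, cylLeft, cylRight, Finset.sup'_le_iff, Finset.lt_inf'_iff,
    Finset.mem_range, ← forall_and, Int.floor_eq_iff]
  refine forall₂_congr fun j _ => ?_
  constructor <;> rintro ⟨h1, h2⟩ <;> constructor <;> linarith

lemma cylLeft_lt_cylRight (x : ℝ) (n : ℕ) : cylLeft α x n < cylRight α x n := by
  have hx : x ∈ Ico (cylLeft α x n) (cylRight α x n) :=
    mem_Ico_cylLeft_cylRight_iff.2 fun _ _ => rfl
  exact hx.1.trans_lt hx.2

lemma cyl_coe_eq (hα : α ∈ Ioo 0 1) (x : ℝ) (n : ℕ) :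
    cyl α x n = (fun t : ℝ => (t : UnitAddCircle)) '' Ico (cylLeft α x n) (cylRight α x n) := by
  ext z
  obtain ⟨y, hy, rfl⟩ : ∃ y : ℝ, ⌊y⌋ = ⌊x⌋ ∧ (y : UnitAddCircle) = z := by
    obtain ⟨t, rfl⟩ := QuotientAddGroup.mk_surjective z
    refine ⟨Int.fract t + ⌊x⌋, ?_, ?_⟩
    · rw [Int.floor_add_intCast, Int.floor_fract, zero_add]
    · exact coe_eq_coe_iff.2 ⟨⌊t⌋ - ⌊x⌋, by rw [Int.fract]; push_cast; ring⟩
  have hmem : ∀ {s : ℝ}, ⌊s⌋ = ⌊x⌋ → s ∈ Ico (⌊x⌋ : ℝ) (⌊x⌋ + 1) := fun {s} hs => by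
    rw [← hs]; exact ⟨Int.floor_le s, Int.lt_floor_add_one s⟩
  have hcoe : (y : UnitAddCircle) ∈ cyl α x n ↔ y ∈ Ico (cylLeft α x n) (cylRight α x n) := by
    simp only [cyl, mem_ofPred_eq, rotF_iterate_coe]
    rw [coding_eq_iff_floor_eq hα hy, mem_Ico_cylLeft_cylRight_iff]
  rw [hcoe]
  constructor
  · exact fun h => ⟨y, h, rfl⟩
  · rintro ⟨s, hs, hsy⟩
    have hs0 : ⌊s⌋ = ⌊x⌋ := by simpa using mem_Ico_cylLeft_cylRight_iff.1 hs 0 n.succ_pos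
    rwa [← (AddCircle.coe_eq_coe_iff_of_mem_Ico (hmem hs0) (hmem hy)).1 hsy]

lemma iterate_image_inter_nonempty_iff {L R : ℝ} (hLR : L < R) (m : ℕ) :
    ((rotF α)^[m] '' ((fun t : ℝ => (t : UnitAddCircle)) '' Ico L R) ∩
      (fun t : ℝ => (t : UnitAddCircle)) '' Ico L R).Nonempty ↔
    ∃ e : ℤ, |m * α - e| < R - L := by
  simp only [Set.Nonempty, image_image, rotF_iterate_coe, mem_inter_iff, mem_image]
  constructor
  · rintro ⟨-, ⟨u, hu, rfl⟩, v, hv, hvu⟩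
    obtain ⟨e, he⟩ := coe_eq_coe_iff.1 hvu
    refine ⟨e, abs_lt.2 ⟨?_, ?_⟩⟩ <;> linarith [hu.1, hu.2, hv.1, hv.2]
  · rintro ⟨e, he⟩
    obtain ⟨he1, he2⟩ := abs_lt.1 he
    have hcoe : ∀ u, ((u + (m * α - e) : ℝ) : UnitAddCircle) = ((u + m * α : ℝ) : UnitAddCircle) :=
      fun u => coe_eq_coe_iff.2 ⟨e, by ring⟩
    rcases le_total 0 (m * α - e) with hd | hd
    · exact ⟨_, ⟨L, ⟨le_rfl, hLR⟩, rfl⟩, L + (m * α - e), ⟨by linarith, by linarith⟩, hcoe L⟩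
    · refine ⟨_, ⟨L - (m * α - e), ⟨by linarith, by linarith⟩, rfl⟩, L, ⟨le_rfl, hLR⟩, ?_⟩
      rw [← hcoe]
      ring_nf

lemma retTime_coe_Ico {L R : ℝ} (hLR : L < R) :
    retTime α ((fun t : ℝ => (t : UnitAddCircle)) '' Ico L R) =
      sInf {m : ℕ | 1 ≤ m ∧ ∃ e : ℤ, |m * α - e| < R - L} := by
  simp only [retTime, iterate_image_inter_nonempty_iff hLR]

/-- `t` lifts the point `F^{-j}(0)`; the endpoints of all cylinders are such points. -/
def IsOrbitPt (α : ℝ) (j : ℕ) (t : ℝ) : Prop := ∃ m : ℤ, t = m - j * α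

lemma le_cylLeft {c x : ℝ} {j n : ℕ} (hc : IsOrbitPt α j c) (hj : j ≤ n) (hcx : c ≤ x) :
    c ≤ cylLeft α x n := by
  obtain ⟨m, rfl⟩ := hc
  have hm : m ≤ ⌊x + j * α⌋ := Int.le_floor.2 (by linarith)
  calc (m : ℝ) - j * α ≤ ⌊x + j * α⌋ - j * α := by gcongr
    _ ≤ cylLeft α x n := Finset.le_sup' (fun j : ℕ => (⌊x + j * α⌋ : ℝ) - j * α)
      (Finset.mem_range.2 (Nat.lt_succ_of_le hj))

lemma cylRight_le {d x : ℝ} {j n : ℕ} (hd : IsOrbitPt α j d) (hj : j ≤ n) (hxd : x < d) :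
    cylRight α x n ≤ d := by
  obtain ⟨m, rfl⟩ := hd
  have hm : ⌊x + j * α⌋ + 1 ≤ m := Int.floor_lt.2 (by linarith)
  calc cylRight α x n ≤ ⌊x + j * α⌋ + 1 - j * α :=
        Finset.inf'_le (fun j : ℕ => (⌊x + j * α⌋ : ℝ) + 1 - j * α)
          (Finset.mem_range.2 (Nat.lt_succ_of_le hj))
    _ ≤ m - j * α := by gcongr; exact_mod_cast hm

/-- The paper's `η_{k-1} = (-1)^{k-1} (q_{k-1} α - p_{k-1})`, indexed like `q`. -/
def eta (α : ℝ) (p q : ℕ → ℕ) (k : ℕ) : ℝ := (-1) ^ (k + 1) * (q k * α - p k)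

structure IsConvergents (α : ℝ) (a p q : ℕ → ℕ) : Prop where
  one_le_a : ∀ k, 1 ≤ a k
  q_zero : q 0 = 0
  q_one : q 1 = 1
  q_add_two : ∀ k, q (k + 2) = a k * q (k + 1) + q k
  p_zero : p 0 = 1
  p_one : p 1 = 0
  p_add_two : ∀ k, p (k + 2) = a k * p (k + 1) + p k
  eta_pos : ∀ k, 0 < eta α p q k

def convergentRatio (q : ℕ → ℕ) (k : ℕ) : ℝ≥0∞ := q (k + 2) / q (k + 1)

def convergentIndex (q : ℕ → ℕ) (n : ℕ) : ℕ := sInf {k | n < q (k + 2)}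

lemma sub_eq_neg_one_pow_mul_eta (α : ℝ) (p q : ℕ → ℕ) (k : ℕ) :
    (q k : ℝ) * α - p k = (-1) ^ (k + 1) * eta α p q k := by
  rw [eta, ← mul_assoc, ← pow_add, ← two_mul, pow_mul, neg_one_sq, one_pow, one_mul]

lemma eta_eq_of_odd (α : ℝ) (p q : ℕ → ℕ) {k : ℕ} (hk : Odd k) :
    eta α p q k = q k * α - p k := by
  rw [eta, (hk.add_one).neg_one_pow, one_mul]

lemma eta_eq_of_even (α : ℝ) (p q : ℕ → ℕ) {k : ℕ} (hk : Even k) :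
    eta α p q k = p k - q k * α := by
  rw [eta, (hk.add_one).neg_one_pow, neg_one_mul, neg_sub]

lemma IsOrbitPt.sub_eta_of_odd {p q : ℕ → ℕ} {j k : ℕ} {t : ℝ} (ht : IsOrbitPt α j t)
    (hk : Odd k) : IsOrbitPt α (j + q k) (t - eta α p q k) := by
  obtain ⟨m, rfl⟩ := ht
  exact ⟨m + p k, by rw [eta_eq_of_odd α p q hk]; push_cast; ring⟩

lemma IsOrbitPt.add_eta_of_even {p q : ℕ → ℕ} {j k : ℕ} {t : ℝ} (ht : IsOrbitPt α j t)
    (hk : Even k) : IsOrbitPt α (j + q k) (t + eta α p q k) := by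
  obtain ⟨m, rfl⟩ := ht
  exact ⟨m + p k, by rw [eta_eq_of_even α p q hk]; push_cast; ring⟩

namespace IsConvergents

variable {a p q : ℕ → ℕ}

lemma eta_zero (h : IsConvergents α a p q) : eta α p q 0 = 1 := by
  simp [eta, h.q_zero, h.p_zero]

lemma eta_one (h : IsConvergents α a p q) : eta α p q 1 = α := by
  simp [eta, h.q_one, h.p_one]

lemma eta_add_two (h : IsConvergents α a p q) (k : ℕ) :
    eta α p q (k + 2) = eta α p q k - a k * eta α p q (k + 1) := by
  simp only [eta, h.q_add_two, h.p_add_two, pow_succ]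
  push_cast
  ring

lemma eta_add_eta_le (h : IsConvergents α a p q) (k : ℕ) :
    eta α p q (k + 1) + eta α p q (k + 2) ≤ eta α p q k := by
  have ha : (1 : ℝ) ≤ a k := by exact_mod_cast h.one_le_a k
  nlinarith [h.eta_add_two k, h.eta_pos (k + 1)]

lemma eta_strictAnti (h : IsConvergents α a p q) : StrictAnti (eta α p q) :=
  strictAnti_nat_of_succ_lt fun k => by linarith [h.eta_add_eta_le k, h.eta_pos (k + 2)]

lemma mem_Ioo (h : IsConvergents α a p q) : α ∈ Ioo 0 1 := by
  rw [← h.eta_one, ← h.eta_zero]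
  exact ⟨h.eta_pos 1, h.eta_strictAnti Nat.one_pos⟩

lemma exists_eta_lt (h : IsConvergents α a p q) {ε : ℝ} (hε : 0 < ε) : ∃ k, eta α p q k < ε := by
  have hhalf : ∀ i, eta α p q (2 * i) ≤ (1 / 2) ^ i := by
    intro i
    induction i with
    | zero => simp [h.eta_zero]
    | succ i ih =>
      have hstep := h.eta_add_eta_le (2 * i)
      have hanti := h.eta_strictAnti (show 2 * i + 1 < 2 * i + 2 by omega)
      rw [pow_succ, show 2 * (i + 1) = 2 * i + 2 by ring]
      linarith
  obtain ⟨i, hi⟩ := exists_pow_lt_of_lt_one hε (by norm_num : (1 / 2 : ℝ) < 1)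
  exact ⟨2 * i, (hhalf i).trans_lt hi⟩

lemma abs_sub_eq_eta (h : IsConvergents α a p q) (k : ℕ) :
    |(q k : ℝ) * α - p k| = eta α p q k := by
  rw [sub_eq_neg_one_pow_mul_eta, abs_mul, abs_pow, abs_neg, abs_one, one_pow, one_mul,
    abs_of_pos (h.eta_pos k)]

lemma q_succ_le (h : IsConvergents α a p q) (k : ℕ) : q (k + 1) ≤ q (k + 2) := by
  rw [h.q_add_two]
  nlinarith [h.one_le_a k]

lemma q_succ_mono (h : IsConvergents α a p q) : Monotone fun k => q (k + 1) :=
  monotone_nat_of_le_succ h.q_succ_le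

lemma one_le_q (h : IsConvergents α a p q) (k : ℕ) : 1 ≤ q (k + 1) := by
  simpa [h.q_one] using h.q_succ_mono (Nat.zero_le k)

lemma le_q (h : IsConvergents α a p q) (k : ℕ) : k ≤ q (k + 1) := by
  induction k using Nat.twoStepInduction with
  | zero => exact Nat.zero_le _
  | one => exact h.one_le_q 1
  | more k _ ih =>
    rw [h.q_add_two (k + 1)]
    nlinarith [h.one_le_a (k + 1), h.one_le_q k]

lemma det (h : IsConvergents α a p q) (k : ℕ) :
    (q (k + 1) : ℤ) * p k - q k * p (k + 1) = (-1) ^ k := by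
  induction k with
  | zero => simp [h.q_zero, h.q_one, h.p_zero, h.p_one]
  | succ k ih =>
    rw [h.q_add_two, h.p_add_two, pow_succ]
    push_cast
    linear_combination -ih

lemma eta_le_abs_sub (h : IsConvergents α a p q) {k : ℕ} {m e : ℤ} (hm : |m| < q (k + 2))
    (hme : m ≠ 0 ∨ e ≠ 0) : eta α p q (k + 1) ≤ |m * α - e| := by
  -- Cramer's rule: `(m, e) = x (q (k + 2), p (k + 2)) + y (q (k + 1), p (k + 1))` in `ℤ²`.
  have hdet := h.det (k + 1)
  set σ : ℤ := (-1) ^ (k + 1)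
  have hσ : σ * σ = 1 := by rw [← pow_add, ← two_mul, pow_mul, neg_one_sq, one_pow]
  set x : ℤ := σ * (m * p (k + 1) - e * q (k + 1))
  set y : ℤ := σ * (e * q (k + 2) - m * p (k + 2))
  have hm_eq : x * q (k + 2) + y * q (k + 1) = m := by
    linear_combination (σ * m) * hdet + m * hσ
  have he_eq : x * p (k + 2) + y * p (k + 1) = e := by
    linear_combination (σ * e) * hdet + e * hσ
  have hxy : y ≠ 0 ∧ x * y ≤ 0 := by
    refine ne_zero_and_mul_nonpos_of_abs_add_lt (by exact_mod_cast h.one_le_q k) (hm_eq ▸ hm) ?_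
    by_contra! hxy0
    rcases hme with hme | hme
    · exact hme (by rw [← hm_eq, hxy0.1, hxy0.2]; ring)
    · exact hme (by rw [← he_eq, hxy0.1, hxy0.2]; ring)
  have hsplit : (m : ℝ) * α - e =
      (-1) ^ (k + 1) * (x * eta α p q (k + 2) - y * eta α p q (k + 1)) := by
    rw [← hm_eq, ← he_eq]
    push_cast
    linear_combination (x : ℝ) * sub_eq_neg_one_pow_mul_eta α p q (k + 2) +
      (y : ℝ) * sub_eq_neg_one_pow_mul_eta α p q (k + 1)
  rw [hsplit, abs_mul, abs_pow, abs_neg, abs_one, one_pow, one_mul]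
  exact le_abs_intCast_mul_sub (h.eta_pos _).le (h.eta_pos _).le hxy.1 hxy.2

lemma eta_le_cylRight_sub_cylLeft (h : IsConvergents α a p q) (x : ℝ) {n k : ℕ}
    (hn : n < q (k + 2)) : eta α p q (k + 1) ≤ cylRight α x n - cylLeft α x n := by
  obtain ⟨i, hi, hL⟩ := Finset.exists_mem_eq_sup' (Finset.nonempty_range_add_one (n := n))
    fun j : ℕ => (⌊x + j * α⌋ : ℝ) - j * α
  obtain ⟨j, hj, hR⟩ := Finset.exists_mem_eq_inf' (Finset.nonempty_range_add_one (n := n))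
    fun j : ℕ => (⌊x + j * α⌋ : ℝ) + 1 - j * α
  rw [Finset.mem_range] at hi hj
  have hLR := cylLeft_lt_cylRight (α := α) x n
  obtain ⟨m, e, hm, hme⟩ : ∃ m e : ℤ, |m| < q (k + 2) ∧
      m * α - e = cylLeft α x n - cylRight α x n := by
    refine ⟨j - i, ⌊x + j * α⌋ + 1 - ⌊x + i * α⌋, abs_sub_lt_iff.2 ⟨by omega, by omega⟩, ?_⟩
    rw [cylLeft, cylRight, hL, hR]
    push_cast
    ring
  have hlen : cylRight α x n - cylLeft α x n = |m * α - e| := by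
    rw [hme, abs_sub_comm, abs_of_pos (sub_pos.2 hLR)]
  refine hlen ▸ h.eta_le_abs_sub hm ?_
  by_contra! h0
  simp only [h0.1, h0.2, Int.cast_zero, zero_mul, sub_zero, abs_zero] at hlen
  linarith

lemma retTime_cyl_le (h : IsConvergents α a p q) (x : ℝ) {n k : ℕ} (hn : n < q (k + 2)) :
    retTime α (cyl α x n) ≤ q (k + 2) := by
  rw [cyl_coe_eq h.mem_Ioo, retTime_coe_Ico (cylLeft_lt_cylRight x n)]
  refine Nat.sInf_le ⟨h.one_le_q (k + 1), p (k + 2), ?_⟩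
  push_cast
  rw [h.abs_sub_eq_eta]
  exact (h.eta_strictAnti (k + 1).lt_succ_self).trans_le (h.eta_le_cylRight_sub_cylLeft x hn)

lemma le_retTime_cyl (h : IsConvergents α a p q) {x c : ℝ} {n k : ℕ}
    (hc : c ≤ cylLeft α x n) (hc' : cylRight α x n ≤ c + eta α p q (k + 1)) :
    q (k + 2) ≤ retTime α (cyl α x n) := by
  have hLR := cylLeft_lt_cylRight (α := α) x n
  rw [cyl_coe_eq h.mem_Ioo, retTime_coe_Ico hLR]
  obtain ⟨j, hj⟩ := h.exists_eta_lt (sub_pos.2 hLR)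
  refine le_csInf ⟨q (j + 1), h.one_le_q j, p (j + 1), ?_⟩ fun m ⟨hm, e, he⟩ => ?_
  · push_cast
    rw [h.abs_sub_eq_eta]
    exact (h.eta_strictAnti j.lt_succ_self).trans hj
  · by_contra! hmq
    have := h.eta_le_abs_sub (k := k) (m := m) (e := e) (by rw [Nat.abs_cast]; exact_mod_cast hmq)
      (Or.inl (by exact_mod_cast (by omega : m ≠ 0)))
    push_cast at this
    linarith

lemma lt_q_convergentIndex (h : IsConvergents α a p q) (n : ℕ) :
    n < q (convergentIndex q n + 2) :=
  Nat.sInf_mem (s := {k | n < q (k + 2)}) ⟨n, n.lt_succ_self.trans_le (h.le_q (n + 1))⟩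

lemma q_convergentIndex_le (h : IsConvergents α a p q) {n : ℕ} (hn : 0 < n) :
    q (convergentIndex q n + 1) ≤ n := by
  rcases Nat.eq_zero_or_pos (convergentIndex q n) with h0 | h0
  · rw [h0, h.q_one]
    exact hn
  · have hk : convergentIndex q n - 1 ∉ {k | n < q (k + 2)} :=
      Nat.notMem_of_lt_sInf (Nat.sub_one_lt_of_lt h0)
    simp only [mem_ofPred_eq, not_lt] at hk
    rwa [show convergentIndex q n - 1 + 2 = convergentIndex q n + 1 by omega] at hk

lemma tendsto_convergentIndex (h : IsConvergents α a p q) :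
    Tendsto (convergentIndex q) atTop atTop := by
  refine tendsto_atTop.2 fun M => eventually_atTop.2 ⟨q (M + 1), fun n hn => ?_⟩
  by_contra! hlt
  have hq : q (convergentIndex q n + 2) ≤ q (M + 1) :=
    h.q_succ_mono (show convergentIndex q n + 1 ≤ M by omega)
  have := h.lt_q_convergentIndex n
  omega

theorem Rup_le (h : IsConvergents α a p q) (x : UnitAddCircle) :
    Rup α x ≤ limsup (convergentRatio q) atTop := by
  obtain ⟨x, rfl⟩ := QuotientAddGroup.mk_surjective x
  calc Rup α x ≤ limsup (convergentRatio q ∘ convergentIndex q) atTop := by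
        refine limsup_le_limsup (eventually_atTop.2 ⟨1, fun n hn => ?_⟩)
        exact ENNReal.div_le_div (Nat.cast_le.2 (h.retTime_cyl_le x (h.lt_q_convergentIndex n)))
          (Nat.cast_le.2 (h.q_convergentIndex_le hn))
    _ ≤ limsup (convergentRatio q) atTop := by
        rw [limsup_comp]
        exact limsup_le_limsup_of_le h.tendsto_convergentIndex

end IsConvergents

/-- The arc `[c, c + eta α p q (k + 1))` with one endpoint at `F^{-b}(0)`: the left one if `k` is
odd, the right one if `k` is even. Its other endpoint is then `F^{-(b + q (k + 1))}(0)`, so the arc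
contains the cylinder of depth `b + q (k + 1)` of each of its points. -/
structure AnchoredArc (α : ℝ) (p q : ℕ → ℕ) where
  k : ℕ
  b : ℕ
  c : ℝ
  isOrbitPt_anchor : IsOrbitPt α b (if Odd k then c else c + eta α p q (k + 1))

namespace AnchoredArc

variable {a p q : ℕ → ℕ}

def right (A : AnchoredArc α p q) : ℝ := A.c + eta α p q (A.k + 1)

def depth (A : AnchoredArc α p q) : ℕ := A.b + q (A.k + 1)

lemma exists_isOrbitPt_endpoints (A : AnchoredArc α p q) :
    (∃ j ≤ A.depth, IsOrbitPt α j A.c) ∧ ∃ j ≤ A.depth, IsOrbitPt α j A.right := by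
  have hanchor := A.isOrbitPt_anchor
  by_cases hk : Odd A.k
  · rw [if_pos hk] at hanchor
    exact ⟨⟨A.b, Nat.le_add_right _ _, hanchor⟩,
      ⟨A.depth, le_rfl, hanchor.add_eta_of_even hk.add_one⟩⟩
  · rw [if_neg hk] at hanchor
    refine ⟨⟨A.depth, le_rfl, ?_⟩, ⟨A.b, Nat.le_add_right _ _, hanchor⟩⟩
    simpa [depth] using hanchor.sub_eta_of_odd (p := p) (q := q) (Nat.not_odd_iff_even.1 hk).add_one

lemma le_retTime_cyl_depth (A : AnchoredArc α p q) (h : IsConvergents α a p q) {x : ℝ}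
    (hx : x ∈ Ico A.c A.right) : q (A.k + 2) ≤ retTime α (cyl α x A.depth) := by
  obtain ⟨⟨i, hi, hL⟩, ⟨j, hj, hR⟩⟩ := A.exists_isOrbitPt_endpoints
  exact h.le_retTime_cyl (le_cylLeft hL hi hx.1) (cylRight_le hR hj hx.2)

lemma exists_isOrbitPt_inner (A : AnchoredArc α p q) (h : IsConvergents α a p q) :
    ∃ P, IsOrbitPt α (A.b + q (A.k + 3)) P ∧ A.c + eta α p q (A.k + 3) ≤ P ∧
      P + eta α p q (A.k + 3) ≤ A.right := by
  rw [right]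
  have hanchor := A.isOrbitPt_anchor
  have hη : 2 * eta α p q (A.k + 3) ≤ eta α p q (A.k + 1) := by
    linarith [h.eta_add_eta_le (A.k + 1), h.eta_strictAnti (show A.k + 2 < A.k + 3 by omega)]
  by_cases hk : Odd A.k
  · rw [if_pos hk] at hanchor
    refine ⟨_, hanchor.add_eta_of_even (p := p) (q := q) (by simpa [parity_simps] using hk), le_rfl,
      by linarith⟩
  · rw [if_neg hk] at hanchor
    refine ⟨_, hanchor.sub_eta_of_odd (p := p) (q := q) (by simpa [parity_simps] using hk),
      by linarith, by linarith⟩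

lemma exists_subarc (A : AnchoredArc α p q) (h : IsConvergents α a p q) {k : ℕ}
    (hk : A.k + 3 ≤ k) :
    ∃ B : AnchoredArc α p q, B.k = k ∧ B.b = A.b + q (A.k + 3) ∧ A.c ≤ B.c ∧
      B.right < A.right := by
  obtain ⟨P, hP, hcP, hPr⟩ := A.exists_isOrbitPt_inner h
  simp only [right] at hPr ⊢
  have hη : eta α p q (k + 1) < eta α p q (A.k + 3) := h.eta_strictAnti (by omega)
  have hη3 := h.eta_pos (A.k + 3)
  by_cases hodd : Odd k
  · refine ⟨⟨k, _, P, by rwa [if_pos hodd]⟩, rfl, rfl, by linarith, by linarith⟩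
  · refine ⟨⟨k, _, P - eta α p q (k + 1), by rwa [if_neg hodd, sub_add_cancel]⟩, rfl, rfl,
      by linarith, by linarith⟩

end AnchoredArc

namespace IsConvergents

variable {a p q : ℕ → ℕ}

lemma exists_subarc_ratio_gt (h : IsConvergents α a p q) (A : AnchoredArc α p q) {v : ℝ≥0∞}
    (hv : v < limsup (convergentRatio q) atTop) (i : ℕ) :
    ∃ B : AnchoredArc α p q, A.c ≤ B.c ∧ B.right < A.right ∧ i ≤ B.k ∧
      v < convergentRatio q B.k ∧ i * B.b ≤ q (B.k + 1) := by
  obtain ⟨k, hk, hvk⟩ := frequently_atTop.1 (frequently_lt_of_lt_limsup (by isBoundedDefault) hv)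
    (A.k + 3 + i + i * (A.b + q (A.k + 3)))
  obtain ⟨B, rfl, hb, hc, hr⟩ := A.exists_subarc h (k := k) (by omega)
  refine ⟨B, hc, hr, by omega, hvk, ?_⟩
  have := h.le_q B.k
  rw [hb]
  omega

lemma exists_nested_arcs (h : IsConvergents α a p q) {u : ℕ → ℝ≥0∞}
    (hu : ∀ i, u i < limsup (convergentRatio q) atTop) :
    ∃ A : ℕ → AnchoredArc α p q, Monotone (fun i => (A i).c) ∧
      StrictAnti (fun i => (A i).right) ∧ ∀ i, i ≤ (A i).k ∧
        u i < convergentRatio q (A i).k ∧ i * (A i).b ≤ q ((A i).k + 1) := by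
  choose next hnext using fun (A : AnchoredArc α p q) (i : ℕ) => h.exists_subarc_ratio_gt A (hu i) i
  let B : ℕ → AnchoredArc α p q := fun n =>
    Nat.rec ⟨1, 0, 0, ⟨0, by simp⟩⟩ (fun i A => next A i) n
  exact ⟨fun i => B (i + 1), monotone_nat_of_le_succ fun i => (hnext (B (i + 1)) (i + 1)).1,
    strictAnti_nat_of_succ_lt fun i => (hnext (B (i + 1)) (i + 1)).2.1,
    fun i => (hnext (B i) i).2.2⟩

theorem exists_le_Rup (h : IsConvergents α a p q) :
    ∃ x : UnitAddCircle,
      limsup (convergentRatio q) atTop ≤ Rup α x := by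
  set L := limsup (convergentRatio q) atTop
  rcases eq_or_ne L 0 with hL | hL
  · exact ⟨0, hL ▸ zero_le⟩
  obtain ⟨u, -, hu, hu_lim⟩ := exists_seq_strictMono_tendsto' (pos_iff_ne_zero.2 hL)
  obtain ⟨A, hc, hr, hA⟩ := h.exists_nested_arcs fun i => (hu i).2
  obtain ⟨x, hx⟩ := exists_forall_mem_Ico_of_monotone_of_strictAnti hc hr
    fun i => le_add_of_nonneg_right (h.eta_pos _).le
  refine ⟨x, ?_⟩
  set f := fun n : ℕ => (retTime α (cyl α x n) : ℝ≥0∞) / (n : ℝ≥0∞)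
  have hdepth : Tendsto (fun i => (A i).depth) atTop atTop :=
    tendsto_atTop_mono (fun i => (hA i).1.trans ((h.le_q _).trans (Nat.le_add_left _ _)))
      tendsto_id
  have hw : ∀ i, u i * (1 + (i : ℝ≥0∞)⁻¹)⁻¹ ≤ f (A i).depth := fun i =>
    calc u i * (1 + (i : ℝ≥0∞)⁻¹)⁻¹
        ≤ convergentRatio q (A i).k * (1 + (i : ℝ≥0∞)⁻¹)⁻¹ := by
          gcongr
          exact (hA i).2.1.le
      _ ≤ q ((A i).k + 2) / (A i).depth :=
          ENNReal.natCast_div_mul_inv_one_add_inv_le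
            (Nat.one_le_iff_ne_zero.1 (h.one_le_q _)) (hA i).2.2
      _ ≤ f (A i).depth :=
          ENNReal.div_le_div_right (Nat.cast_le.2 ((A i).le_retTime_cyl_depth h (hx i))) _
  have hw_lim : Tendsto (fun i : ℕ => u i * (1 + (i : ℝ≥0∞)⁻¹)⁻¹) atTop (𝓝 L) := by
    simpa using ENNReal.Tendsto.mul hu_lim (Or.inr ENNReal.one_ne_top)
      ENNReal.tendsto_inv_one_add_inv_natCast (Or.inl one_ne_zero)
  calc L = limsup (fun i : ℕ => u i * (1 + (i : ℝ≥0∞)⁻¹)⁻¹) atTop := hw_lim.limsup_eq.symm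
    _ ≤ limsup (f ∘ fun i => (A i).depth) atTop := limsup_le_limsup (Eventually.of_forall hw)
    _ ≤ Rup α x := by
        rw [limsup_comp]
        exact limsup_le_limsup_of_le hdepth

end IsConvergents

end CircleRotation

theorem statement7_general
    (α : ℝ)
    (a p q : ℕ → ℕ) (ha : ∀ k, 1 ≤ a k)
    -- `a k`, `p (k+1)`, `q (k+1)` are the paper's `a_{k+1}`, `p_k`, `q_k`;
    -- `p 0`, `q 0` are the paper's `p_{-1} = 1`, `q_{-1} = 0`.
    (hq0 : q 0 = 0) (hq1 : q 1 = 1) (hq : ∀ k, q (k + 2) = a k * q (k + 1) + q k)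
    (hp0 : p 0 = 1) (hp1 : p 1 = 0) (hp : ∀ k, p (k + 2) = a k * p (k + 1) + p k)
    -- `a` is the continued fraction expansion of `α`:
    -- the paper's `η_k = (-1)^k (q_k α - p_k)` is positive for all `k ≥ -1`.
    (hcf : ∀ k, 0 < (-1 : ℝ) ^ (k + 1) * ((q k : ℝ) * α - (p k : ℝ)))
    :
    (∀ x : UnitAddCircle,
      Rup α x ≤ limsup (fun k : ℕ => (q (k + 2) : ℝ≥0∞) / (q (k + 1) : ℝ≥0∞)) atTop) ∧
    (∃ x : UnitAddCircle,
      Rup α x = limsup (fun k : ℕ => (q (k + 2) : ℝ≥0∞) / (q (k + 1) : ℝ≥0∞)) atTop) := by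
  have h : CircleRotation.IsConvergents α a p q := ⟨ha, hq0, hq1, hq, hp0, hp1, hp, hcf⟩
  obtain ⟨x, hx⟩ := h.exists_le_Rup
  exact ⟨h.Rup_le, x, le_antisymm (h.Rup_le x) hx⟩

/-- Every `x ∈ 𝕋` satisfies
`R_up(x) ≤ limsup_{k→∞} q_{k+1} / q_k` (as extended reals in `[0,∞]`), and some
`x ∈ 𝕋` attains equality; that is, `max_x R_up(x) = limsup_{k→∞} q_{k+1} / q_k`.
With our indexing the paper's `q_k`, `q_{k+1}` are `q (k+1)`, `q (k+2)`. -/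
theorem statement7
    (α : ℝ) (hα : α ∈ Set.Ioo (0 : ℝ) 1) (hirr : Irrational α)
    (a p q : ℕ → ℕ) (ha : ∀ k, 1 ≤ a k)
    -- `a k`, `p (k+1)`, `q (k+1)` are the paper's `a_{k+1}`, `p_k`, `q_k`;
    -- `p 0`, `q 0` are the paper's `p_{-1} = 1`, `q_{-1} = 0`.
    (hq0 : q 0 = 0) (hq1 : q 1 = 1) (hq : ∀ k, q (k + 2) = a k * q (k + 1) + q k)
    (hp0 : p 0 = 1) (hp1 : p 1 = 0) (hp : ∀ k, p (k + 2) = a k * p (k + 1) + p k)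
    -- `a` is the continued fraction expansion of `α`:
    -- the paper's `η_k = (-1)^k (q_k α - p_k)` is positive for all `k ≥ -1`.
    (hcf : ∀ k, 0 < (-1 : ℝ) ^ (k + 1) * ((q k : ℝ) * α - (p k : ℝ)))
    :
    (∀ x : UnitAddCircle,
      Rup α x ≤ limsup (fun k : ℕ => (q (k + 2) : ℝ≥0∞) / (q (k + 1) : ℝ≥0∞)) atTop) ∧
    (∃ x : UnitAddCircle,
      Rup α x = limsup (fun k : ℕ => (q (k + 2) : ℝ≥0∞) / (q (k + 1) : ℝ≥0∞)) atTop) :=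
  statement7_general α a p q ha hq0 hq1 hq hp0 hp1 hp hcf
end
end

section
/- Suppose the sequence (a_k)_{k≥1} is bounded and let M = limsup_{k→∞} a_k, r_0 = liminf_{k→∞} q_k/(q_{k+1} + q_k - 1), r_1 = limsup_{k→∞} q_{k+1}/q_k, and γ = (√5 + 1)/2. Then r_0 = 1/(r_1 + 1), equivalently r_1 = 1/r_0 - 1, and 1/(M+2) ≤ r_0 ≤ γ^{-2} < γ ≤ r_1 ≤ M + 1. -/
open Filter

/-- Suppose `(a_k)` is bounded and let `M = limsup a_k`,
`r₀ = liminf_{k→∞} q_k / (q_{k+1} + q_k - 1)`, `r₁ = limsup_{k→∞} q_{k+1} / q_k` and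
`γ = (√5 + 1)/2`.  Then `r₀ = 1/(r₁ + 1)` (equivalently `r₁ = 1/r₀ - 1`) and
`1/(M+2) ≤ r₀ ≤ γ⁻² < γ ≤ r₁ ≤ M + 1`.
With our indexing the paper's `q_k`, `q_{k+1}` are `q (k+1)`, `q (k+2)`. -/
theorem statement9
    (a q : ℕ → ℕ) (ha : ∀ k, 1 ≤ a k)
    -- `a k` and `q (k+1)` are the paper's `a_{k+1}` and `q_k`; `q 0` is `q_{-1} = 0`.
    (hq0 : q 0 = 0) (hq1 : q 1 = 1) (hq : ∀ k, q (k + 2) = a k * q (k + 1) + q k)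
    (hbd : BddAbove (Set.range a)) :
    let M : ℕ := limsup a atTop
    let r0 : ℝ := liminf (fun k : ℕ =>
      (q (k + 1) : ℝ) / ((q (k + 2) + q (k + 1) - 1 : ℕ) : ℝ)) atTop
    let r1 : ℝ := limsup (fun k : ℕ => (q (k + 2) : ℝ) / (q (k + 1) : ℝ)) atTop
    let γ : ℝ := (Real.sqrt 5 + 1) / 2
    r0 = 1 / (r1 + 1) ∧ r1 = 1 / r0 - 1 ∧
      1 / ((M : ℝ) + 2) ≤ r0 ∧ r0 ≤ (γ ^ 2)⁻¹ ∧ (γ ^ 2)⁻¹ < γ ∧ γ ≤ r1 ∧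
      r1 ≤ (M : ℝ) + 1 := by
  intro M r0 r1 γ
  obtain ⟨A, hA⟩ := hbd
  have hA' : ∀ k, a k ≤ A := fun k => hA ⟨k, rfl⟩
  -- basic facts about q
  have hq1pos : ∀ k, 1 ≤ q (k + 1) := by
    intro k
    induction k with
    | zero => simp [hq1]
    | succ n ih => rw [hq]; have := ha n; nlinarith
  have hqmono : ∀ k, q k ≤ q (k + 1) := by
    intro k
    cases k with
    | zero => simp [hq0, hq1]
    | succ n => rw [hq]; have := ha n; have := hq1pos n; nlinarith
  have hqlin : ∀ k, k ≤ q (k + 1) := by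
    intro k
    induction k with
    | zero => omega
    | succ n ih =>
      rw [hq]
      have h1 := ha n
      cases n with
      | zero => simp [hq0, hq1]; omega
      | succ m => have := hq1pos m; nlinarith
  -- real versions
  set F : ℕ → ℝ := fun k => (q (k + 2) : ℝ) / (q (k + 1) : ℝ) with hFdef
  set G : ℕ → ℝ := fun k =>
      (q (k + 1) : ℝ) / ((q (k + 2) + q (k + 1) - 1 : ℕ) : ℝ) with hGdef
  have hr1 : r1 = limsup F atTop := rfl
  have hr0 : r0 = liminf G atTop := rfl
  have hqpos : ∀ k, (0 : ℝ) < (q (k + 1) : ℝ) := by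
    intro k; exact_mod_cast hq1pos k
  have hqFm : ∀ k, (q (k + 1) : ℝ) * F k = (q (k + 2) : ℝ) := by
    intro k
    simp only [hFdef]
    rw [mul_comm]
    exact div_mul_cancel₀ _ (hqpos k).ne'
  have hF1 : ∀ k, 1 ≤ F k := by
    intro k
    rw [hFdef]
    rw [le_div_iff₀ (hqpos k), one_mul]
    exact_mod_cast hqmono (k + 1)
  have hFle : ∀ k, F k ≤ (A : ℝ) + 1 := by
    intro k
    rw [hFdef]
    rw [div_le_iff₀ (hqpos k)]
    have h2 : q (k + 2) ≤ (A + 1) * q (k + 1) := by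
      rw [hq]; have := hA' k; have := hqmono k; nlinarith
    calc (q (k + 2) : ℝ) ≤ (((A + 1) * q (k + 1) : ℕ) : ℝ) := by exact_mod_cast h2
      _ = ((A : ℝ) + 1) * q (k + 1) := by push_cast; ring
  -- boundedness of F
  have hFb : IsBoundedUnder (· ≤ ·) atTop F := isBoundedUnder_of ⟨(A : ℝ) + 1, hFle⟩
  have hFbg : IsBoundedUnder (· ≥ ·) atTop F := isBoundedUnder_of ⟨1, hF1⟩
  have hFcob : IsCoboundedUnder (· ≤ ·) atTop F := hFbg.isCoboundedUnder_le
  -- denominator of G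
  have hDcast : ∀ k, ((q (k + 2) + q (k + 1) - 1 : ℕ) : ℝ)
      = (q (k + 2) : ℝ) + (q (k + 1) : ℝ) - 1 := by
    intro k
    have h2 : 1 ≤ q (k + 2) := hq1pos (k + 1)
    have h1 : 1 ≤ q (k + 2) + q (k + 1) := by omega
    push_cast [Nat.cast_sub h1]
    ring
  have hq2one : ∀ k, (1 : ℝ) ≤ (q (k + 2) : ℝ) := by
    intro k
    have h2 : 1 ≤ q (k + 2) := hq1pos (k + 1)
    exact_mod_cast h2
  have hq2pos : ∀ k, (0 : ℝ) < (q (k + 2) : ℝ) := fun k => lt_of_lt_of_le zero_lt_one (hq2one k)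
  have hDpos : ∀ k, (0 : ℝ) < (q (k + 2) : ℝ) + (q (k + 1) : ℝ) - 1 := by
    intro k; have := hq2one k; have := hqpos k; linarith
  have hGval : ∀ k, G k = (q (k + 1) : ℝ) / ((q (k + 2) : ℝ) + (q (k + 1) : ℝ) - 1) := by
    intro k; simp only [hGdef]; rw [hDcast]
  have hG0 : ∀ k, 0 < G k := by
    intro k; rw [hGval]; exact div_pos (hqpos k) (hDpos k)
  have hG1 : ∀ k, G k ≤ 1 := by
    intro k
    rw [hGval, div_le_one (hDpos k)]
    have := hq2one k
    linarith
  have hGbg : IsBoundedUnder (· ≥ ·) atTop G := isBoundedUnder_of ⟨0, fun k => (hG0 k).le⟩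
  have hGb : IsBoundedUnder (· ≤ ·) atTop G := isBoundedUnder_of ⟨1, hG1⟩
  have hGcobg : IsCoboundedUnder (· ≥ ·) atTop G := hGb.isCoboundedUnder_ge
  -- facts about γ
  have hs5 : Real.sqrt 5 ^ 2 = 5 := Real.sq_sqrt (by norm_num)
  have hs5nn : (0 : ℝ) ≤ Real.sqrt 5 := Real.sqrt_nonneg 5
  have hγdef : γ = (Real.sqrt 5 + 1) / 2 := rfl
  have hγ2 : γ ^ 2 = γ + 1 := by rw [hγdef]; nlinarith
  have hγgt1 : (1 : ℝ) < γ := by rw [hγdef]; nlinarith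
  -- 1 ≤ r1
  have hr1ge1 : (1 : ℝ) ≤ r1 := by
    rw [hr1]
    exact le_limsup_of_frequently_le ((Eventually.of_forall hF1).frequently) hFb
  -- γ ≤ r1
  have hγinv : 1 + 1 / γ = γ := by
    have hγpos : (0:ℝ) < γ := by linarith
    field_simp
    nlinarith
  have hkey : ∀ k, γ ≤ F k ∨ γ ≤ F (k + 1) := by
    intro k
    by_cases h : γ ≤ F k
    · exact Or.inl h
    · right
      push_neg at h
      have hF3 : F (k + 1) = ((a (k + 1) : ℝ) * (q (k + 2) : ℝ) + (q (k + 1) : ℝ))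
          / (q (k + 2) : ℝ) := by
        simp only [hFdef]
        congr 1
        · have := hq (k + 1)
          push_cast [this]; ring
      have hq2p := hq2pos k
      have ha1 : (1 : ℝ) ≤ (a (k + 1) : ℝ) := by exact_mod_cast ha (k + 1)
      have hc : (q (k + 1) : ℝ) / (q (k + 2) : ℝ) * (q (k + 2) : ℝ) = (q (k + 1) : ℝ) :=
        div_mul_cancel₀ _ hq2p.ne'
      have hstep : 1 + (q (k + 1) : ℝ) / (q (k + 2) : ℝ) ≤ F (k + 1) := by
        rw [hF3, le_div_iff₀ hq2p]
        nlinarith [hqpos k]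
      have hinv : 1 / F k = (q (k + 1) : ℝ) / (q (k + 2) : ℝ) := by
        rw [hFdef]
        exact one_div_div _ _
      have hFkpos : (0:ℝ) < F k := lt_of_lt_of_le zero_lt_one (hF1 k)
      have h2 : 1 / γ ≤ 1 / F k := one_div_le_one_div_of_le hFkpos h.le
      calc γ = 1 + 1 / γ := hγinv.symm
        _ ≤ 1 + 1 / F k := by linarith
        _ = 1 + (q (k + 1) : ℝ) / (q (k + 2) : ℝ) := by rw [hinv]
        _ ≤ F (k + 1) := hstep
  have hγr1 : γ ≤ r1 := by
    rw [hr1]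
    refine le_limsup_of_frequently_le ?_ hFb
    rw [frequently_atTop]
    intro N
    rcases hkey N with h | h
    · exact ⟨N, le_refl N, h⟩
    · exact ⟨N + 1, Nat.le_succ N, h⟩
  -- eventually a k ≤ M
  have hMmem : ∀ᶠ k in atTop, a k ≤ M := by
    have hne : {m : ℕ | ∀ᶠ k in atTop, a k ≤ m}.Nonempty :=
      ⟨A, Eventually.of_forall hA'⟩
    have hMeq : M = sInf {m : ℕ | ∀ᶠ k in atTop, a k ≤ m} := limsup_eq
    exact hMeq ▸ Nat.sInf_mem hne
  -- r1 ≤ M + 1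
  have hr1M : r1 ≤ (M : ℝ) + 1 := by
    rw [hr1]
    refine limsup_le_of_le hFcob ?_
    filter_upwards [hMmem] with k hk
    rw [hFdef]
    rw [div_le_iff₀ (hqpos k)]
    have h2 : q (k + 2) ≤ (M + 1) * q (k + 1) := by
      rw [hq]; have := hqmono k; nlinarith
    calc (q (k + 2) : ℝ) ≤ (((M + 1) * q (k + 1) : ℕ) : ℝ) := by exact_mod_cast h2
      _ = ((M : ℝ) + 1) * q (k + 1) := by push_cast; ring
  -- lower estimates for r0
  have hlow : ∀ ε : ℝ, 0 < ε → 1 / (r1 + 1 + ε) ≤ r0 := by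
    intro ε hε
    rw [hr0]
    have hev : ∀ᶠ k in atTop, F k < r1 + ε :=
      eventually_lt_of_limsup_lt (by rw [← hr1]; linarith) hFb
    refine le_liminf_of_le hGcobg ?_
    filter_upwards [hev] with k hk
    rw [hGval k, div_le_div_iff₀ (by linarith : (0:ℝ) < r1 + 1 + ε) (hDpos k)]
    have h1 := hqFm k
    have h2 := hqpos k
    have h3 : (q (k + 2) : ℝ) ≤ (q (k + 1) : ℝ) * (r1 + ε) := by
      rw [← h1]; exact mul_le_mul_of_nonneg_left hk.le h2.le
    linarith [mul_pos h2 hε]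
  have hr1pos : (0:ℝ) < r1 + 1 := by linarith
  have hr0pos : (0:ℝ) < r0 :=
    lt_of_lt_of_le (by positivity : (0:ℝ) < 1 / (r1 + 1 + 1)) (hlow 1 one_pos)
  have hge : 1 / (r1 + 1) ≤ r0 := by
    rw [div_le_iff₀ hr1pos]
    refine le_of_forall_pos_le_add fun δ hδ => ?_
    have h := hlow (δ / r0) (by positivity)
    have hx : (0:ℝ) < r1 + 1 + δ / r0 := by positivity
    rw [div_le_iff₀ hx] at h
    have h5 : r0 * (δ / r0) = δ := by field_simp
    linarith
  -- upper estimates for r0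
  have hupp : ∀ ε : ℝ, 0 < ε → ε < 1 → r0 ≤ 1 / (r1 + 1 - 2 * ε) := by
    intro ε hε hε1
    have hpos2 : (0:ℝ) < r1 + 1 - 2 * ε := by linarith
    rw [hr0]
    refine liminf_le_of_frequently_le ?_ hGbg
    have hfreq : ∃ᶠ k in atTop, r1 - ε < F k :=
      frequently_lt_of_lt_limsup hFcob (by rw [← hr1]; linarith)
    have hev : ∀ᶠ k in atTop, (1:ℝ) ≤ ε * (q (k + 1) : ℝ) := by
      obtain ⟨N, hN⟩ := exists_nat_ge (1 / ε)
      rw [eventually_atTop]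
      refine ⟨N, fun k hk => ?_⟩
      have h1 : (N : ℝ) ≤ (q (k + 1) : ℝ) := by
        calc (N : ℝ) ≤ (k : ℝ) := by exact_mod_cast hk
          _ ≤ (q (k + 1) : ℝ) := by exact_mod_cast hqlin k
      have h2 : 1 / ε * ε = 1 := by field_simp
      calc (1:ℝ) = 1 / ε * ε := h2.symm
        _ ≤ (N : ℝ) * ε := mul_le_mul_of_nonneg_right hN hε.le
        _ ≤ (q (k + 1) : ℝ) * ε := mul_le_mul_of_nonneg_right h1 hε.le
        _ = ε * (q (k + 1) : ℝ) := mul_comm _ _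
    refine (hfreq.and_eventually hev).mono ?_
    rintro k ⟨hk1, hk2⟩
    rw [hGval k, div_le_div_iff₀ (hDpos k) hpos2]
    have h1 := hqFm k
    have h2 := hqpos k
    have h3 : (q (k + 1) : ℝ) * (r1 - ε) ≤ (q (k + 2) : ℝ) := by
      rw [← h1]; exact mul_le_mul_of_nonneg_left hk1.le h2.le
    have h4 : (1:ℝ) ≤ ε * (q (k + 1) : ℝ) := hk2
    linarith
  have hle : r0 ≤ 1 / (r1 + 1) := by
    rw [le_div_iff₀ hr1pos]
    refine le_of_forall_pos_le_add fun δ hδ => ?_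
    set ε := min (δ / (2 * r0)) (1 / 2) with hεdef
    have hεpos : 0 < ε := lt_min (by positivity) (by norm_num)
    have hεlt1 : ε < 1 := lt_of_le_of_lt (min_le_right _ _) (by norm_num)
    have h := hupp ε hεpos hεlt1
    have hpos2 : (0:ℝ) < r1 + 1 - 2 * ε := by linarith
    rw [le_div_iff₀ hpos2] at h
    have h3 : ε ≤ δ / (2 * r0) := min_le_left _ _
    rw [le_div_iff₀ (by positivity : (0:ℝ) < 2 * r0)] at h3
    linarith
  have hr0eq : r0 = 1 / (r1 + 1) := le_antisymm hle hge
  refine ⟨hr0eq, ?_, ?_, ?_, ?_, hγr1, hr1M⟩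
  · rw [hr0eq, one_div_one_div]; ring
  · rw [hr0eq]
    exact one_div_le_one_div_of_le hr1pos (by linarith)
  · rw [hr0eq, hγ2, ← one_div]
    exact one_div_le_one_div_of_le (by linarith) (by linarith)
  · rw [hγ2, ← one_div, div_lt_iff₀ (by linarith : (0:ℝ) < γ + 1)]
    nlinarith
end

section
/- Suppose the sequence (a_k)_{k≥1} is bounded and let M = limsup_{k→∞} a_k, r_0 = liminf_{k→∞} q_k/(q_{k+1} + q_k - 1), r_1 = limsup_{k→∞} q_{k+1}/q_k, and γ = (√5 + 1)/2. Then r_1 = γ if and only if M = 1, and r_0 = γ^{-2} if and only if M = 1. -/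
open Filter

/-- Suppose `(a_k)` is bounded and let `M = limsup a_k`,
`r₀ = liminf_{k→∞} q_k / (q_{k+1} + q_k - 1)`, `r₁ = limsup_{k→∞} q_{k+1} / q_k` and
`γ = (√5 + 1)/2`.  Then `r₁ = γ ↔ M = 1` and `r₀ = γ⁻² ↔ M = 1`.
With our indexing the paper's `q_k`, `q_{k+1}` are `q (k+1)`, `q (k+2)`. -/
theorem statement10
    (a q : ℕ → ℕ) (ha : ∀ k, 1 ≤ a k)
    -- `a k` and `q (k+1)` are the paper's `a_{k+1}` and `q_k`; `q 0` is `q_{-1} = 0`.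
    (hq0 : q 0 = 0) (hq1 : q 1 = 1) (hq : ∀ k, q (k + 2) = a k * q (k + 1) + q k)
    (hbd : BddAbove (Set.range a)) :
    let M : ℕ := limsup a atTop
    let r0 : ℝ := liminf (fun k : ℕ =>
      (q (k + 1) : ℝ) / ((q (k + 2) + q (k + 1) - 1 : ℕ) : ℝ)) atTop
    let r1 : ℝ := limsup (fun k : ℕ => (q (k + 2) : ℝ) / (q (k + 1) : ℝ)) atTop
    let γ : ℝ := (Real.sqrt 5 + 1) / 2
    (r1 = γ ↔ M = 1) ∧ (r0 = (γ ^ 2)⁻¹ ↔ M = 1) := by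
  intro M r0 r1 γ
  -- facts about γ
  have hs5 : Real.sqrt 5 ^ 2 = 5 := Real.sq_sqrt (by norm_num)
  have hs5pos : 0 < Real.sqrt 5 := Real.sqrt_pos.mpr (by norm_num)
  have hs5lt : Real.sqrt 5 < 2.5 := by nlinarith
  have hs5gt : 2 < Real.sqrt 5 := by nlinarith
  have hγ1 : 1 < γ := by show 1 < (Real.sqrt 5 + 1) / 2; nlinarith
  have hγ2 : γ < 2 := by show (Real.sqrt 5 + 1) / 2 < 2; nlinarith
  have hγ0 : 0 < γ := lt_trans one_pos hγ1
  have hγsq : γ ^ 2 = γ + 1 := by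
    show ((Real.sqrt 5 + 1) / 2) ^ 2 = (Real.sqrt 5 + 1) / 2 + 1; nlinarith
  -- facts about q
  have hqpos : ∀ k, 1 ≤ q (k + 1) := by
    intro k; induction k with
    | zero => exact hq1.ge
    | succ n ih => rw [hq n]; nlinarith [ha n]
  have hqmono : ∀ k, q (k + 1) ≤ q (k + 2) := by
    intro k; rw [hq k]; nlinarith [ha k]
  have hqgrow : ∀ k, k ≤ q (k + 1) := by
    intro k; induction k with
    | zero => omega
    | succ n ih =>
      rw [hq n]
      rcases Nat.eq_zero_or_pos n with h | h
      · subst h; simp [hq0, hq1]; exact ha 0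
      · obtain ⟨m, rfl⟩ := Nat.exists_eq_succ_of_ne_zero h.ne'
        have h1 := hqpos m
        nlinarith [ha (m + 1)]
  have hqR : ∀ k, (0 : ℝ) < (q (k + 1) : ℝ) := by
    intro k; exact_mod_cast hqpos k
  set f : ℕ → ℝ := fun k => (q (k + 2) : ℝ) / (q (k + 1) : ℝ) with hfdef
  set g : ℕ → ℝ := fun k =>
      (q (k + 1) : ℝ) / ((q (k + 2) + q (k + 1) - 1 : ℕ) : ℝ) with hgdef
  have hf1 : ∀ k, 1 ≤ f k := fun k =>
    (one_le_div (hqR k)).mpr (by exact_mod_cast hqmono k)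
  -- characterization of M
  obtain ⟨B, hB⟩ : ∃ B, ∀ k, a k ≤ B := by
    obtain ⟨B, hB⟩ := hbd; exact ⟨B, fun k => hB ⟨k, rfl⟩⟩
  have hMeq : M = sInf {n | ∀ᶠ k in atTop, a k ≤ n} := Filter.limsup_eq
  have hSne : ∀ᶠ k in atTop, a k ≤ M := by
    rw [hMeq]
    have hne : {n | ∀ᶠ k in atTop, a k ≤ n}.Nonempty :=
      ⟨B, Filter.Eventually.of_forall hB⟩
    exact Nat.sInf_mem hne
  have hM1 : 1 ≤ M := by
    by_contra h
    have hM0 : M = 0 := by omega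
    rw [hM0] at hSne
    obtain ⟨k, hk⟩ := hSne.exists
    exact absurd (ha k) (by omega)
  by_cases hM : M = 1
  · -- M = 1 : eventually a k = 1
    have hNa : ∀ᶠ k in atTop, a k = 1 := by
      rw [hM] at hSne
      filter_upwards [hSne] with k hk
      have := ha k; omega
    obtain ⟨N, hN⟩ := eventually_atTop.mp hNa
    have hrec : ∀ k, N ≤ k → f (k + 1) = 1 + (f k)⁻¹ := by
      intro k hk
      have hak : a (k + 1) = 1 := hN _ (by omega)
      have h2 := (hqR k).ne'
      have h3 := (hqR (k + 1)).ne'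
      simp only [hfdef]
      rw [hq (k + 1), hak, one_mul]
      push_cast
      field_simp
    have hγinv : γ = 1 + γ⁻¹ := by
      field_simp
      nlinarith [hγsq]
    have hcon : ∀ k, N ≤ k → |f (k + 1) - γ| ≤ γ⁻¹ * |f k - γ| := by
      intro k hk
      have hfk := hf1 k
      have hfk0 : (0 : ℝ) < f k := lt_of_lt_of_le one_pos hfk
      have e1 : 1 + (f k)⁻¹ - γ = (f k)⁻¹ - γ⁻¹ := by
        nth_rewrite 1 [hγinv]; ring
      rw [hrec k hk, e1, inv_sub_inv hfk0.ne' hγ0.ne', abs_div,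
        abs_of_pos (mul_pos hfk0 hγ0), abs_sub_comm, inv_mul_eq_div]
      gcongr
      nlinarith
    have hdecay : ∀ m, |f (N + m) - γ| ≤ γ⁻¹ ^ m * |f N - γ| := by
      intro m; induction m with
      | zero => simp
      | succ n ih =>
        have h1 : |f (N + (n + 1)) - γ| ≤ γ⁻¹ * |f (N + n) - γ| := by
          have := hcon (N + n) (by omega)
          simpa [Nat.add_assoc] using this
        calc |f (N + (n + 1)) - γ| ≤ γ⁻¹ * |f (N + n) - γ| := h1
          _ ≤ γ⁻¹ * (γ⁻¹ ^ n * |f N - γ|) := by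
              have hnn : (0:ℝ) ≤ γ⁻¹ := by positivity
              exact mul_le_mul_of_nonneg_left ih hnn
          _ = γ⁻¹ ^ (n + 1) * |f N - γ| := by ring
    have hpow : Tendsto (fun m : ℕ => γ⁻¹ ^ m * |f N - γ|) atTop (nhds 0) := by
      have h1 : Tendsto (fun m : ℕ => γ⁻¹ ^ m) atTop (nhds 0) :=
        tendsto_pow_atTop_nhds_zero_of_lt_one (by positivity) (by
          rw [inv_lt_one_iff₀]; right; exact hγ1)
      simpa using h1.mul_const _
    have habs : Tendsto (fun m => |f (N + m) - γ|) atTop (nhds 0) :=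
      squeeze_zero (fun m => abs_nonneg _) hdecay hpow
    have hshift : Tendsto (fun m => f (N + m)) atTop (nhds γ) := by
      have h1 : Tendsto (fun m => f (N + m) - γ) atTop (nhds 0) :=
        (tendsto_zero_iff_abs_tendsto_zero _).mpr habs
      have := h1.add_const γ
      simpa using this
    have hftends : Tendsto f atTop (nhds γ) := by
      rw [← tendsto_add_atTop_iff_nat N]
      simpa [Nat.add_comm] using hshift
    have h1 : r1 = γ := hftends.limsup_eq
    -- r0
    have hqinf : Tendsto (fun k => (q (k + 1) : ℝ)) atTop atTop :=
      tendsto_atTop_mono (fun k => by exact_mod_cast hqgrow k)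
        tendsto_natCast_atTop_atTop
    have hinv : Tendsto (fun k => ((q (k + 1) : ℝ))⁻¹) atTop (nhds 0) :=
      hqinf.inv_tendsto_atTop
    have hden : Tendsto (fun k => f k + 1 - ((q (k + 1) : ℝ))⁻¹) atTop
        (nhds (γ ^ 2)) := by
      have := (hftends.add_const 1).sub hinv
      rw [hγsq]
      simpa using this
    have hγ2ne : (γ : ℝ) ^ 2 ≠ 0 := by positivity
    have hgeq : ∀ k, g k = (f k + 1 - ((q (k + 1) : ℝ))⁻¹)⁻¹ := by
      intro k
      have hle : 1 ≤ q (k + 2) + q (k + 1) := by have := hqpos k; omega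
      have h2 := (hqR k).ne'
      have h3 := (hqR (k + 1)).ne'
      have hd : (0:ℝ) < (q (k + 2) : ℝ) + (q (k + 1) : ℝ) - 1 := by
        have := hqpos k; have := hqpos (k + 1)
        have e1 : (1:ℝ) ≤ (q (k + 2) : ℝ) := by exact_mod_cast hqpos (k + 1)
        have e2 : (1:ℝ) ≤ (q (k + 1) : ℝ) := by exact_mod_cast hqpos k
        linarith
      simp only [hgdef, hfdef]
      rw [Nat.cast_sub hle]
      push_cast
      have h4 : ((q (k + 2) : ℝ) + (q (k + 1) : ℝ) - 1) ≠ 0 := hd.ne'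
      field_simp
    have hgtend : Tendsto g atTop (nhds ((γ ^ 2)⁻¹)) :=
      Filter.Tendsto.congr (fun k => (hgeq k).symm) (hden.inv₀ hγ2ne)
    have h0 : r0 = (γ ^ 2)⁻¹ := hgtend.liminf_eq
    exact ⟨⟨fun _ => hM, fun _ => h1⟩, ⟨fun _ => hM, fun _ => h0⟩⟩
  · -- M ≠ 1
    have hM2 : 2 ≤ M := by omega
    have hfreq : ∃ᶠ k in atTop, 2 ≤ a k := by
      by_contra h
      rw [not_frequently] at h
      have h1 : (1:ℕ) ∈ {n | ∀ᶠ k in atTop, a k ≤ n} := by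
        filter_upwards [h] with k hk
        simp only [not_le] at hk
        omega
      have := Nat.sInf_le h1
      rw [← hMeq] at this
      omega
    have hmono' : ∀ k, q k ≤ q (k + 1) := by
      intro k
      cases k with
      | zero => omega
      | succ n => exact hqmono n
    -- r1 ≥ 2
    have hfr : ∃ᶠ k in atTop, (2:ℝ) ≤ f k := by
      refine hfreq.mono fun k hk => ?_
      simp only [hfdef]
      rw [le_div_iff₀ (hqR k)]
      have h2 : 2 * q (k + 1) ≤ q (k + 2) := by
        rw [hq k]
        exact le_trans (Nat.mul_le_mul_right _ hk) (Nat.le_add_right _ _)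
      exact_mod_cast h2
    have hbddf : IsBoundedUnder (· ≤ ·) atTop f := by
      refine ⟨(B : ℝ) + 1, eventually_map.mpr (Eventually.of_forall fun k => ?_)⟩
      simp only [hfdef]
      rw [div_le_iff₀ (hqR k)]
      have hnat : q (k + 2) ≤ (B + 1) * q (k + 1) := by
        rw [hq k]
        calc a k * q (k + 1) + q k ≤ B * q (k + 1) + q (k + 1) :=
              Nat.add_le_add (Nat.mul_le_mul_right _ (hB k)) (hmono' k)
          _ = (B + 1) * q (k + 1) := by ring
      exact_mod_cast hnat
    have h2r1 : (2:ℝ) ≤ r1 := le_limsup_of_frequently_le hfr hbddf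
    have h1 : r1 ≠ γ := by
      intro h
      rw [h] at h2r1
      linarith
    -- r0 ≤ 4/11
    have hfr0 : ∃ᶠ k in atTop, g k ≤ 4 / 11 := by
      have hev : ∀ᶠ k in atTop, 4 ≤ k := eventually_atTop.mpr ⟨4, fun k hk => hk⟩
      refine (hfreq.and_eventually hev).mono ?_
      rintro k ⟨hk2, hk4⟩
      have hq4 : 4 ≤ q (k + 1) := le_trans hk4 (hqgrow k)
      have h2q : 2 * q (k + 1) ≤ q (k + 2) := by
        rw [hq k]
        exact le_trans (Nat.mul_le_mul_right _ hk2) (Nat.le_add_right _ _)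
      have hs : q (k + 1) * 11 ≤ 4 * (q (k + 2) + q (k + 1) - 1) := by omega
      have hdpos : 0 < q (k + 2) + q (k + 1) - 1 := by
        have := hqpos k; have := hqpos (k + 1); omega
      simp only [hgdef]
      rw [div_le_div_iff₀ (by exact_mod_cast hdpos) (by norm_num : (0:ℝ) < 11)]
      exact_mod_cast hs
    have hbddg : IsBoundedUnder (· ≥ ·) atTop g := by
      refine ⟨0, eventually_map.mpr (Eventually.of_forall fun k => ?_)⟩
      simp only [hgdef]
      positivity
    have hr04 : r0 ≤ 4 / 11 := liminf_le_of_frequently_le hfr0 hbddg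
    have hlt : (4:ℝ) / 11 < (γ ^ 2)⁻¹ := by
      have hγ175 : γ < 1.75 := by show (Real.sqrt 5 + 1) / 2 < 1.75; linarith
      have hsq : γ ^ 2 < 11 / 4 := by rw [hγsq]; linarith
      calc (4:ℝ) / 11 = ((11:ℝ) / 4)⁻¹ := by norm_num
        _ < (γ ^ 2)⁻¹ := by
            apply inv_strictAnti₀ (by positivity) hsq
    have h0 : r0 ≠ (γ ^ 2)⁻¹ := by
      intro h
      rw [h] at hr04
      linarith
    exact ⟨⟨fun h => absurd h h1, fun h => absurd h hM⟩,
      ⟨fun h => absurd h h0, fun h => absurd h hM⟩⟩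
end

section
/- Let k ≥ -1 (with the convention η_{-1} = 1) and let I be a nonempty semiopen arc of 𝕋 whose length |I| satisfies η_{k+1} < |I| ≤ η_k. Then the Poincaré return time of I equals q_{k+1}, i.e. τ(I) = q_{k+1}. -/
open Filter MeasureTheory Set
open scoped ENNReal

noncomputable section

/-- `etaf α p q k` is the paper's `η_{k-1} = (-1)^{k-1} (q_{k-1} α - p_{k-1})`
(so `etaf α p q 0 = η_{-1} = 1` and `etaf α p q 1 = η_0 = α`). -/
def etaf (α : ℝ) (p q : ℕ → ℕ) (k : ℕ) : ℝ :=
  (-1 : ℝ) ^ (k + 1) * ((q k : ℝ) * α - (p k : ℝ))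


/-! ### Auxiliary lemmas -/

private lemma aux_rotF_iterate (α : ℝ) (k : ℕ) (t : ℝ) :
    (rotF α)^[k] ((t : ℝ) : UnitAddCircle) = ((t + k * α : ℝ) : UnitAddCircle) := by
  induction k with
  | zero => simp
  | succ k ih =>
    rw [Function.iterate_succ_apply', ih]
    show ((t + k * α : ℝ) : UnitAddCircle) + ((α : ℝ) : UnitAddCircle) = _
    rw [← AddCircle.coe_add]
    congr 1
    push_cast
    ring

private lemma aux_coe_eq_coe_of_int (x y : ℝ) (m : ℤ) (h : x - y = m) :
    ((x : ℝ) : UnitAddCircle) = ((y : ℝ) : UnitAddCircle) := by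
  have h0 : ((x - y : ℝ) : UnitAddCircle) = 0 := by
    rw [AddCircle.coe_eq_zero_iff (p := (1:ℝ))]
    exact ⟨m, by rw [h]; simp⟩
  have h1 : ((x - y : ℝ) : UnitAddCircle) = (x : UnitAddCircle) - (y : UnitAddCircle) := by
    norm_cast
  rw [h1, sub_eq_zero] at h0
  exact h0

private lemma aux_inter_iff (α u v : ℝ) (huv : u < v) (k : ℕ) :
    ((rotF α)^[k] '' ((fun t : ℝ => (t : UnitAddCircle)) '' Ico u v) ∩
      (fun t : ℝ => (t : UnitAddCircle)) '' Ico u v).Nonempty ↔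
    ∃ m : ℤ, |(k : ℝ) * α - (m : ℝ)| < v - u := by
  constructor
  · rintro ⟨z, ⟨w, ⟨t, ht, rfl⟩, rfl⟩, s, hs, hz⟩
    rw [aux_rotF_iterate] at hz
    have h0 : ((t + k * α - s : ℝ) : UnitAddCircle) = 0 := by
      have h1 : ((t + k * α - s : ℝ) : UnitAddCircle)
          = ((t + k * α : ℝ) : UnitAddCircle) - ((s : ℝ) : UnitAddCircle) := by norm_cast
      rw [h1, ← hz, sub_self]
    rw [AddCircle.coe_eq_zero_iff (p := (1:ℝ))] at h0
    obtain ⟨n, hn⟩ := h0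
    refine ⟨n, ?_⟩
    have hn' : (n : ℝ) = t + k * α - s := by simpa using hn
    have h1 : (k:ℝ) * α - n = s - t := by linarith
    rw [h1, abs_lt]
    obtain ⟨ht1, ht2⟩ := ht; obtain ⟨hs1, hs2⟩ := hs
    constructor <;> linarith
  · rintro ⟨m, hm⟩
    rw [abs_lt] at hm
    obtain ⟨hm1, hm2⟩ := hm
    rcases le_or_gt 0 ((k:ℝ) * α - m) with hd | hd
    · refine ⟨((u + ((k:ℝ)*α - m) : ℝ) : UnitAddCircle),
        ⟨((u:ℝ) : UnitAddCircle), ⟨u, ⟨le_refl u, huv⟩, rfl⟩, ?_⟩,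
        ⟨u + ((k:ℝ)*α - m), ⟨by linarith, by linarith⟩, rfl⟩⟩
      rw [aux_rotF_iterate]
      exact aux_coe_eq_coe_of_int _ _ m (by ring)
    · refine ⟨((u:ℝ) : UnitAddCircle),
        ⟨((u - ((k:ℝ)*α - m) : ℝ) : UnitAddCircle),
          ⟨u - ((k:ℝ)*α - m), ⟨by linarith, by linarith⟩, rfl⟩, ?_⟩,
        ⟨u, ⟨le_refl u, huv⟩, rfl⟩⟩
      rw [aux_rotF_iterate]
      exact aux_coe_eq_coe_of_int _ _ m (by ring)

private lemma aux_det (a p q : ℕ → ℕ)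
    (hq0 : q 0 = 0) (hq1 : q 1 = 1) (hq : ∀ k, q (k + 2) = a k * q (k + 1) + q k)
    (hp0 : p 0 = 1) (hp1 : p 1 = 0) (hp : ∀ k, p (k + 2) = a k * p (k + 1) + p k) :
    ∀ k, (q k : ℤ) * p (k + 1) - q (k + 1) * p k = (-1) ^ (k + 1) := by
  intro k
  induction k with
  | zero => simp [hq0, hq1, hp0, hp1]
  | succ k ih =>
    rw [hq k, hp k]
    push_cast
    linear_combination -ih

private lemma aux_q_pos (a q : ℕ → ℕ) (ha : ∀ k, 1 ≤ a k) (hq1 : q 1 = 1)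
    (hq : ∀ k, q (k + 2) = a k * q (k + 1) + q k) : ∀ k, 1 ≤ q (k + 1) := by
  intro k
  induction k with
  | zero => exact hq1.ge
  | succ k ih =>
    rw [hq k]
    have h2 : 1 * 1 ≤ a k * q (k + 1) := Nat.mul_le_mul (ha k) ih
    omega

private lemma aux_best_approx (α : ℝ) (p q : ℕ → ℕ) (j : ℕ)
    (hdet : (q j : ℤ) * p (j + 1) - q (j + 1) * p j = (-1) ^ (j + 1))
    (hpos : 0 < etaf α p q j) (hpos' : 0 < etaf α p q (j + 1))
    (n m : ℤ) (hn1 : 1 ≤ n) (hn2 : n < q (j + 1)) :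
    etaf α p q j ≤ |(n : ℝ) * α - (m : ℝ)| := by
  obtain ⟨X, Y, hXY, habs⟩ : ∃ X Y : ℤ, X * q j + Y * q (j + 1) = n ∧
      |(n : ℝ) * α - (m : ℝ)| = |(X : ℝ) * etaf α p q j - (Y : ℝ) * etaf α p q (j + 1)| := by
    rcases Nat.even_or_odd j with hj | hj
    · have hs : ((-1 : ℤ)) ^ (j + 1) = -1 := Odd.neg_one_pow hj.add_one
      have hsr : ((-1 : ℝ)) ^ (j + 1) = -1 := Odd.neg_one_pow hj.add_one
      have hsr2 : ((-1 : ℝ)) ^ (j + 2) = 1 := Even.neg_one_pow hj.add_one.add_one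
      rw [hs] at hdet
      have hdr : ((q j : ℝ)) * p (j + 1) - (q (j + 1) : ℝ) * p j = -1 := by exact_mod_cast hdet
      refine ⟨q (j + 1) * m - p (j + 1) * n, p j * n - q j * m,
        by linear_combination -n * hdet, ?_⟩
      have hq_eq : (n : ℝ) * α - m =
          -(((q (j+1) * m - p (j+1) * n : ℤ) : ℝ) * etaf α p q j
            - ((p j * n - q j * m : ℤ) : ℝ) * etaf α p q (j + 1)) := by
        unfold etaf
        rw [hsr, hsr2]
        push_cast
        linear_combination ((n : ℝ) * α - (m : ℝ)) * hdr
      rw [hq_eq, abs_neg]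
    · have hs : ((-1 : ℤ)) ^ (j + 1) = 1 := Even.neg_one_pow hj.add_one
      have hsr : ((-1 : ℝ)) ^ (j + 1) = 1 := Even.neg_one_pow hj.add_one
      have hsr2 : ((-1 : ℝ)) ^ (j + 2) = -1 := Odd.neg_one_pow hj.add_one.add_one
      rw [hs] at hdet
      have hdr : ((q j : ℝ)) * p (j + 1) - (q (j + 1) : ℝ) * p j = 1 := by exact_mod_cast hdet
      refine ⟨p (j + 1) * n - q (j + 1) * m, q j * m - p j * n,
        by linear_combination n * hdet, ?_⟩
      have hq_eq : (n : ℝ) * α - m =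
          ((p (j+1) * n - q (j+1) * m : ℤ) : ℝ) * etaf α p q j
            - ((q j * m - p j * n : ℤ) : ℝ) * etaf α p q (j + 1) := by
        unfold etaf
        rw [hsr, hsr2]
        push_cast
        linear_combination -((n : ℝ) * α - (m : ℝ)) * hdr
      rw [hq_eq]
  rw [habs]
  have hqj : (0 : ℤ) ≤ q j := Int.natCast_nonneg _
  rcases lt_trichotomy Y 0 with hY | hY | hY
  · have hX : 1 ≤ X := by nlinarith
    have hXr : (1 : ℝ) ≤ X := by exact_mod_cast hX
    have hY1 : Y ≤ -1 := by omega
    have hYr : (Y : ℝ) ≤ -1 := by exact_mod_cast hY1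
    have hmain : etaf α p q j ≤ (X : ℝ) * etaf α p q j - (Y : ℝ) * etaf α p q (j + 1) := by
      nlinarith
    exact le_trans hmain (le_abs_self _)
  · subst hY
    have hX : 1 ≤ X := by nlinarith
    have hXr : (1 : ℝ) ≤ X := by exact_mod_cast hX
    have hmain : etaf α p q j ≤ (X : ℝ) * etaf α p q j - ((0 : ℤ) : ℝ) * etaf α p q (j + 1) := by
      push_cast; nlinarith
    exact le_trans hmain (le_abs_self _)
  · have hX : X ≤ -1 := by nlinarith
    have hXr : (X : ℝ) ≤ -1 := by exact_mod_cast hX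
    have hY1 : 1 ≤ Y := by omega
    have hYr : (1 : ℝ) ≤ Y := by exact_mod_cast hY1
    have hmain : etaf α p q j ≤ -((X : ℝ) * etaf α p q j - (Y : ℝ) * etaf α p q (j + 1)) := by
      nlinarith
    exact le_trans hmain (neg_le_abs _)

/-- Let `k ≥ -1` (with `η_{-1} = 1`) and let `I` be a nonempty semiopen
arc of `𝕋` with `η_{k+1} < |I| ≤ η_k`.  Then `τ(I) = q_{k+1}`.
A semiopen arc is the image in `𝕋` of an interval `[u, v)` with `u < v`, `v - u ≤ 1`,
of length `v - u`.  With our indexing (`j = k + 1 : ℕ` for the paper's `k ≥ -1`), the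
paper's `η_{k+1}`, `η_k`, `q_{k+1}` are `etaf α p q (j+1)`, `etaf α p q j`, `q (j+1)`. -/
theorem statement14
    (α : ℝ) (hα : α ∈ Set.Ioo (0 : ℝ) 1) (hirr : Irrational α)
    (a p q : ℕ → ℕ) (ha : ∀ k, 1 ≤ a k)
    -- `a k`, `p (k+1)`, `q (k+1)` are the paper's `a_{k+1}`, `p_k`, `q_k`;
    -- `p 0`, `q 0` are the paper's `p_{-1} = 1`, `q_{-1} = 0`.
    (hq0 : q 0 = 0) (hq1 : q 1 = 1) (hq : ∀ k, q (k + 2) = a k * q (k + 1) + q k)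
    (hp0 : p 0 = 1) (hp1 : p 1 = 0) (hp : ∀ k, p (k + 2) = a k * p (k + 1) + p k)
    -- `a` is the continued fraction expansion of `α`:
    -- the paper's `η_k = (-1)^k (q_k α - p_k)` is positive for all `k ≥ -1`.
    (hcf : ∀ k, 0 < (-1 : ℝ) ^ (k + 1) * ((q k : ℝ) * α - (p k : ℝ)))
    (j : ℕ) (u v : ℝ) (huv : u < v) (hlen : v - u ≤ 1)
    (h1 : etaf α p q (j + 1) < v - u) (h2 : v - u ≤ etaf α p q j) :
    retTime α ((fun t : ℝ => (t : UnitAddCircle)) '' Ico u v) = q (j + 1) := by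
  have hqpos := aux_q_pos a q ha hq1 hq
  have hdet := aux_det a p q hq0 hq1 hq hp0 hp1 hp j
  have hposj : 0 < etaf α p q j := hcf j
  have hposj' : 0 < etaf α p q (j + 1) := hcf (j + 1)
  have habs_eta : ∀ k, |(q k : ℝ) * α - (p k : ℝ)| = etaf α p q k := by
    intro k
    have h := hcf k
    unfold etaf
    rw [← abs_of_pos h, abs_mul, abs_pow, abs_neg, abs_one, one_pow, one_mul]
  have hset : {k : ℕ | 1 ≤ k ∧ (((rotF α)^[k] '' ((fun t : ℝ => (t : UnitAddCircle)) '' Ico u v)) ∩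
      ((fun t : ℝ => (t : UnitAddCircle)) '' Ico u v)).Nonempty}
      = {k : ℕ | 1 ≤ k ∧ ∃ m : ℤ, |(k : ℝ) * α - (m : ℝ)| < v - u} := by
    ext k
    exact and_congr_right fun _ => aux_inter_iff α u v huv k
  rw [retTime, hset]
  have hmem : q (j + 1) ∈ {k : ℕ | 1 ≤ k ∧ ∃ m : ℤ, |(k : ℝ) * α - (m : ℝ)| < v - u} := by
    refine ⟨hqpos j, ⟨(p (j + 1) : ℤ), ?_⟩⟩
    have := habs_eta (j + 1)
    push_cast
    rw [this]
    exact lt_of_le_of_lt (le_of_eq rfl) h1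
  apply le_antisymm
  · exact Nat.sInf_le hmem
  · refine le_csInf ⟨q (j + 1), hmem⟩ fun b hb => ?_
    by_contra hlt
    push_neg at hlt
    obtain ⟨hb1, m, hbm⟩ := hb
    have hbest := aux_best_approx α p q j hdet hposj hposj' (b : ℤ) m
      (by exact_mod_cast hb1) (by exact_mod_cast hlt)
    push_cast at hbest
    linarith
end
end

section
/- For every x ∈ X, R_low(F(x)) ≤ R_low(x) and R_up(F(x)) ≤ R_up(x); that is, the lower and upper local return rates are subinvariant under F. -/
/-!
A point `y` of the `(n+1)`-cylinder of `x` is sent by `F` into the `n`-cylinder of `F x`, and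
if `F^k y' = y` with both in `C_{x,n+1}`, then `F^k (F y') = F y` with both in `F(C_{x,n+1})`.
Hence `τ(C_{F x, n}) ≤ τ(C_{x, n+1})`, and dividing by `n` instead of `n + 1` changes neither
the `liminf` nor the `limsup`, because `(n + 1) / n → 1`.
-/

open Filter
open scoped ENNReal

noncomputable section

/-- The `n`-cylinder `C_{x,n}` of `x` for the coding `c` of the system `(X, F)`
(`C_{x,0} = X` by convention). -/
def cylG {X A : Type*} (F : X → X) (c : X → A) (x : X) (n : ℕ) : Set X :=
  {y | ∀ k < n, c (F^[k] y) = c (F^[k] x)}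

/-- The Poincaré return time `τ(M) = inf {k ≥ 1 | F^k(M) ∩ M ≠ ∅} ∈ ℕ ∪ {∞}`. -/
def tauG {X : Type*} (F : X → X) (M : Set X) : ℕ∞ :=
  sInf {e : ℕ∞ | ∃ k : ℕ, e = (k : ℕ∞) ∧ 1 ≤ k ∧ (F^[k] '' M ∩ M).Nonempty}

/-- The lower local return rate `R_low(x) = liminf_n τ(C_{x,n})/n`, valued in `[0,∞]`. -/
def RlowG {X A : Type*} (F : X → X) (c : X → A) (x : X) : ℝ≥0∞ :=
  liminf (fun n : ℕ => (tauG F (cylG F c x n) : ℝ≥0∞) / (n : ℝ≥0∞)) atTop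

/-- The upper local return rate `R_up(x) = limsup_n τ(C_{x,n})/n`, valued in `[0,∞]`. -/
def RupG {X A : Type*} (F : X → X) (c : X → A) (x : X) : ℝ≥0∞ :=
  limsup (fun n : ℕ => (tauG F (cylG F c x n) : ℝ≥0∞) / (n : ℝ≥0∞)) atTop

open Topology

namespace ENNReal

variable {ι : Type*} {f : Filter ι} [f.NeBot] {u v : ι → ℝ≥0∞}

theorem liminf_mul_of_tendsto_one (hv : Tendsto v f (𝓝 1)) :
    liminf (u * v) f = liminf u f := by
  apply le_antisymm
  · rw [mul_comm]
    simpa [hv.limsup_eq, hv.liminf_eq] using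
      liminf_mul_le (u := v) (v := u) (f := f) (by simp [hv.limsup_eq]) (by simp [hv.limsup_eq])
  · simpa [hv.liminf_eq] using le_liminf_mul (u := u) (v := v) (f := f)

theorem limsup_mul_of_tendsto_one (hv : Tendsto v f (𝓝 1)) :
    limsup (u * v) f = limsup u f := by
  apply le_antisymm
  · simpa [hv.limsup_eq] using
      limsup_mul_le' (u := u) (v := v) (f := f) (by simp [hv.limsup_eq]) (by simp [hv.limsup_eq])
  · simpa [hv.liminf_eq] using le_limsup_mul (u := u) (v := v) (f := f)

theorem tendsto_nat_succ_div_nat :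
    Tendsto (fun n : ℕ => ((n + 1 : ℕ) : ℝ≥0∞) / n) atTop (𝓝 1) := by
  have h := (tendsto_const_nhds (x := (1 : ℝ≥0∞))).add ENNReal.tendsto_inv_nat_nhds_zero
  rw [add_zero] at h
  refine h.congr' ?_
  filter_upwards [eventually_ne_atTop 0] with n hn
  rw [Nat.cast_succ, ENNReal.add_div, ENNReal.div_self (by simpa) (by simp), one_div]

theorem succ_div_nat_eq_mul (a : ℕ → ℝ≥0∞) :
    (fun n : ℕ => a (n + 1) / n) =
      (fun n => a (n + 1) / (n + 1 : ℕ)) * fun n => ((n + 1 : ℕ) : ℝ≥0∞) / n := by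
  funext n
  rw [Pi.mul_apply, div_eq_mul_inv, div_eq_mul_inv, div_eq_mul_inv, mul_assoc, ← mul_assoc _⁻¹,
    ENNReal.inv_mul_cancel (by simp) (by simp), one_mul]

theorem liminf_succ_div_nat (a : ℕ → ℝ≥0∞) :
    liminf (fun n => a (n + 1) / n) atTop = liminf (fun n => a n / n) atTop := by
  rw [succ_div_nat_eq_mul]
  exact (liminf_mul_of_tendsto_one tendsto_nat_succ_div_nat).trans
    (liminf_nat_add (fun n => a n / n) 1)

theorem limsup_succ_div_nat (a : ℕ → ℝ≥0∞) :
    limsup (fun n => a (n + 1) / n) atTop = limsup (fun n => a n / n) atTop := by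
  rw [succ_div_nat_eq_mul]
  exact (limsup_mul_of_tendsto_one tendsto_nat_succ_div_nat).trans
    (limsup_nat_add (fun n => a n / n) 1)

end ENNReal

section ReturnTime

variable {X A : Type*} (F : X → X)

theorem tauG_antitone : Antitone (tauG F) := by
  intro M N hMN
  apply sInf_le_sInf
  rintro e ⟨k, rfl, hk, z, hz, hzM⟩
  exact ⟨k, rfl, hk, z, Set.image_mono hMN hz, hMN hzM⟩

theorem tauG_image_le (M : Set X) : tauG F (F '' M) ≤ tauG F M := by
  apply sInf_le_sInf
  rintro e ⟨k, rfl, hk, _, ⟨y, hy, rfl⟩, hyM⟩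
  refine ⟨k, rfl, hk, F (F^[k] y), ⟨F y, ⟨y, hy, rfl⟩, ?_⟩, ⟨F^[k] y, hyM, rfl⟩⟩
  rw [← Function.iterate_succ_apply, Function.iterate_succ_apply']

theorem mapsTo_cylG_succ (c : X → A) (x : X) (n : ℕ) :
    Set.MapsTo F (cylG F c x (n + 1)) (cylG F c (F x) n) := fun y hy k hk => by
  simpa only [Function.iterate_succ_apply] using hy (k + 1) (by omega)

theorem tauG_cylG_apply_le (c : X → A) (x : X) (n : ℕ) :
    tauG F (cylG F c (F x) n) ≤ tauG F (cylG F c x (n + 1)) :=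
  (tauG_antitone F (mapsTo_cylG_succ F c x n).image_subset).trans (tauG_image_le F _)

end ReturnTime

theorem statement18_general {X A : Type*} (F : X → X) (c : X → A) (x : X) :
    RlowG F c (F x) ≤ RlowG F c x ∧ RupG F c (F x) ≤ RupG F c x := by
  set a : ℕ → ℝ≥0∞ := fun n => tauG F (cylG F c x n)
  have rate_le : ∀ n : ℕ, (tauG F (cylG F c (F x) n) : ℝ≥0∞) / n ≤ a (n + 1) / n := fun n =>
    ENNReal.div_le_div_right (ENat.toENNReal_le.mpr (tauG_cylG_apply_le F c x n)) _
  constructor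
  · calc RlowG F c (F x) ≤ liminf (fun n => a (n + 1) / n) atTop :=
          liminf_le_liminf (Eventually.of_forall rate_le)
      _ = RlowG F c x := ENNReal.liminf_succ_div_nat a
  · calc RupG F c (F x) ≤ limsup (fun n => a (n + 1) / n) atTop :=
          limsup_le_limsup (Eventually.of_forall rate_le)
      _ = RupG F c x := ENNReal.limsup_succ_div_nat a

/-- For every `x ∈ X`, `R_low(F x) ≤ R_low(x)` and
`R_up(F x) ≤ R_up(x)`: the local return rates are subinvariant under `F`. -/
theorem statement18 {X A : Type*} [Finite A] (F : X → X) (c : X → A) (x : X) :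
    RlowG F c (F x) ≤ RlowG F c x ∧ RupG F c (F x) ≤ RupG F c x :=
  statement18_general F c x
end
end
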